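/- arXiv:2207.05740 — 8 statements merged into one kernel-verified Lean document; each statement's English description precedes it below -/
import Mathlib

section
/- In the Markov category FinStoch, conditionals exist: for every stochastic matrix f : A → X × Y (i.e. f(x,y|a) ≥ 0 with ∑_{x,y} f(x,y|a) = 1 for all a) there exists a stochastic matrix f_{|X} : X × A → Y such that f(x,y|a) = f_{|X}(y|x,a) · ∑_{y'} f(x,y'|a) for all a, x, y. -/
/-- Existence of conditionals in FinStoch: for every stochastic matrix
`f : A → X × Y` (entries `f a x y = f(x,y|a)`, nonnegative and summing to `1` over
`(x,y)` for each `a`), there is a stochastic matrix `c : X × A → Y`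
(`c x a y = f_{|X}(y|x,a)`) with `f(x,y|a) = f_{|X}(y|x,a) · ∑_{y'} f(x,y'|a)`. -/
theorem finStoch_has_conditionals {A X Y : Type} [Fintype A] [Fintype X] [Fintype Y]
    (f : A → X → Y → ℝ)
    (hnn : ∀ a x y, 0 ≤ f a x y)
    (hsum : ∀ a, ∑ x : X, ∑ y : Y, f a x y = 1) :
    ∃ c : X → A → Y → ℝ,
      (∀ x a y, 0 ≤ c x a y) ∧
      (∀ x a, ∑ y : Y, c x a y = 1) ∧
      (∀ a x y, f a x y = c x a y * ∑ y' : Y, f a x y') := by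
  by_cases hA : Nonempty A
  · -- Y must be nonempty, else hsum fails
    obtain ⟨a0⟩ := hA
    have hY : Nonempty Y := by
      by_contra h
      have : (∑ x : X, ∑ y : Y, f a0 x y) = 0 := by
        apply Finset.sum_eq_zero
        intro x _
        exact Finset.sum_eq_zero (fun y _ => absurd ⟨y⟩ h)
      rw [hsum a0] at this; norm_num at this
    haveI := hY
    have hcard : (0:ℝ) < (Fintype.card Y : ℝ) := by
      exact_mod_cast Fintype.card_pos
    refine ⟨fun x a y => if 0 < ∑ y' : Y, f a x y' then f a x y / ∑ y' : Y, f a x y'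
        else 1 / (Fintype.card Y : ℝ), ?_, ?_, ?_⟩
    · intro x a y
      dsimp only
      split
      · exact div_nonneg (hnn a x y) (le_of_lt ‹_›)
      · positivity
    · intro x a
      dsimp only
      by_cases h : 0 < ∑ y' : Y, f a x y'
      · simp only [if_pos h, ← Finset.sum_div]
        exact div_self (ne_of_gt h)
      · simp only [if_neg h, Finset.sum_const, Finset.card_univ, nsmul_eq_mul]
        field_simp
    · intro a x y
      dsimp only
      by_cases h : 0 < ∑ y' : Y, f a x y'
      · rw [if_pos h, div_mul_cancel₀ _ (ne_of_gt h)]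
      · rw [if_neg h]
        have hz : ∑ y' : Y, f a x y' = 0 :=
          le_antisymm (not_lt.mp h) (Finset.sum_nonneg fun y' _ => hnn a x y')
        have : f a x y = 0 :=
          le_antisymm (hz ▸ Finset.single_le_sum (fun y' _ => hnn a x y') (Finset.mem_univ y))
            (hnn a x y)
        rw [this, hz, mul_zero]
  · exact ⟨fun _ _ _ => 0, fun x a => absurd ⟨a⟩ hA, fun x a => absurd ⟨a⟩ hA,
      fun a => absurd ⟨a⟩ hA⟩
end

section
/- Let G be a finite directed acyclic graph and P a joint probability distribution on the product of finite sets ∏_v X_v that factorizes as P(x) = ∏_v K_v(x_v | x_{Pa(v)}) for stochastic kernels K_v. Then P satisfies the local Markov property: for every vertex v, the variable X_v is conditionally independent of its non-descendants (excluding its parents) given its parents. -/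
open Classical

/-- Ancestors of a set `W` of vertices: all `u` with a directed path (possibly of
length 0) from `u` to some element of `W`. -/
def An {V : Type} (E : V → V → Prop) (W : Set V) : Set V :=
  {u | ∃ w ∈ W, Relation.ReflTransGen E u w}

/-- Parents of a vertex `v`. -/
def Pa {V : Type} (E : V → V → Prop) (v : V) : Set V := {u | E u v}

/-- Acyclicity of a directed graph. -/
def IsAcyclicDigraph {V : Type} (E : V → V → Prop) : Prop :=
  ∀ v, ¬ Relation.TransGen E v v

/-- Marginal of a joint distribution `P` on `∏ v, X v` onto the coordinates in `S`,
evaluated at (the `S`-coordinates of) `x`. -/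
noncomputable def marg {V : Type} [Fintype V] [DecidableEq V] {X : V → Type}
    [∀ v, Fintype (X v)] (P : (∀ v, X v) → ℝ) (S : Set V) (x : ∀ v, X v) : ℝ :=
  ∑ y : ∀ v, X v, if ∀ v ∈ S, y v = x v then P y else 0

/-- Conditional independence `A ⊥ B | S` for a finite joint distribution `P`:
`P(a,b,s)·P(s) = P(a,s)·P(b,s)` for all values (phrased via marginals). -/
def CondIndep {V : Type} [Fintype V] [DecidableEq V] {X : V → Type}
    [∀ v, Fintype (X v)] (P : (∀ v, X v) → ℝ) (A B S : Set V) : Prop :=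
  ∀ x : ∀ v, X v,
    marg P (A ∪ B ∪ S) x * marg P S x = marg P (A ∪ S) x * marg P (B ∪ S) x

/-- `P` factorizes according to the directed graph `E`: `P(x) = ∏ v K v (x)` for
stochastic kernels `K v` depending only on the coordinate `v` and its parents. -/
def Factorizes {V : Type} [Fintype V] [DecidableEq V] {X : V → Type}
    [∀ v, Fintype (X v)] (E : V → V → Prop) (P : (∀ v, X v) → ℝ) : Prop :=
  ∃ K : (v : V) → (∀ u, X u) → ℝ,
    (∀ v x, 0 ≤ K v x) ∧
    (∀ v x, ∑ a : X v, K v (Function.update x v a) = 1) ∧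
    (∀ v x x', x v = x' v → (∀ u, E u v → x u = x' u) → K v x = K v x') ∧
    (∀ x, P x = ∏ v, K v x)

/-- An undirected walk in the directed graph `E`. -/
def IsUWalk {V : Type} (E : V → V → Prop) (p : List V) : Prop :=
  p.Chain' fun a b => E a b ∨ E b a

/-- An undirected path `p` is blocked by `Z` (Pearl): it contains a chain or fork
whose middle vertex is in `Z`, or a collider whose middle vertex is not an ancestor
of `Z`. -/
def Blocked {V : Type} (E : V → V → Prop) (Z : Set V) (p : List V) : Prop :=
  ∃ (i : ℕ) (a m b : V), p[i]? = some a ∧ p[i+1]? = some m ∧ p[i+2]? = some b ∧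
    ((((E a m ∧ E m b) ∨ (E m a ∧ E b m) ∨ (E m a ∧ E m b)) ∧ m ∈ Z) ∨
      ((E a m ∧ E b m) ∧ m ∉ An E Z))

/-- Classical d-separation: every undirected path between `X` and `Y` is blocked
by `Z`. -/
def DSep {V : Type} (E : V → V → Prop) (X Y Z : Set V) : Prop :=
  ∀ p : List V, IsUWalk E p → p.Nodup →
    (∃ x ∈ X, p.head? = some x) → (∃ y ∈ Y, p.getLast? = some y) → Blocked E Z p

section
variable {V : Type} [Fintype V] [DecidableEq V] {X : V → Type} [∀ v, Fintype (X v)]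

lemma sum_condense (m : V) (c : X m) (f : (∀ v, X v) → ℝ) :
    ∑ y : ∀ v, X v, (if y m = c then ∑ a : X m, f (Function.update y m a) else 0)
      = ∑ z : ∀ v, X v, f z := by
  have h1 : ∀ y : ∀ v, X v, (if y m = c then ∑ a : X m, f (Function.update y m a) else 0)
      = ∑ a : X m, (if y m = c then f (Function.update y m a) else 0) := by
    intro y; split <;> simp
  rw [Finset.sum_congr rfl fun y _ => h1 y]
  have e1 : ∑ p : ((v : V) → X v) × X m, (if p.1 m = c then f (Function.update p.1 m p.2) else 0)
      = ∑ y : (v : V) → X v, ∑ a : X m, if y m = c then f (Function.update y m a) else 0 :=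
    Fintype.sum_prod_type _
  rw [← e1]
  have key : ∑ p : (∀ v, X v) × X m, (if p.1 m = c then f (Function.update p.1 m p.2) else 0)
      = ∑ p : (∀ v, X v) × X m, (if p.2 = c then f p.1 else 0) := by
    apply Fintype.sum_bijective (fun p : (∀ v, X v) × X m => (Function.update p.1 m p.2, p.1 m))
    · apply Function.Involutive.bijective
      intro p
      refine Prod.ext ?_ (by simp)
      simp [Function.update_idem]
    · intro p
      simp
  rw [key]
  have e2 : ∑ p : ((v : V) → X v) × X m, (if p.2 = c then f p.1 else 0)
      = ∑ y : (v : V) → X v, ∑ a : X m, if a = c then f y else 0 :=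
    Fintype.sum_prod_type _
  rw [e2]
  simp

lemma exists_sink {E : V → V → Prop} (hacyc : IsAcyclicDigraph E) (C : Finset V)
    (hC : C.Nonempty) : ∃ m ∈ C, ∀ w ∈ C, ¬ E m w := by
  letI : IsTrans V fun a b => Relation.TransGen E b a := ⟨fun a b c h1 h2 => h2.trans h1⟩
  letI : IsIrrefl V fun a b => Relation.TransGen E b a := ⟨fun a h => hacyc a h⟩
  have hwf := Finite.wellFounded_of_trans_of_irrefl (fun a b : V => Relation.TransGen E b a)
  obtain ⟨m, hm, hmin⟩ := hwf.has_min ↑C (Finset.coe_nonempty.mpr hC)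
  exact ⟨m, hm, fun w hw he => hmin w hw (Relation.TransGen.single he)⟩

lemma sum_constraint_update (v : V) (W : Set V) (hv : v ∈ W)
    (H : (∀ u, X u) → ℝ) (hH : ∀ (y : ∀ u, X u) (a : X v), H (Function.update y v a) = H y)
    (x : ∀ u, X u) (a : X v) :
    (∑ y : ∀ u, X u, if ∀ u ∈ W, y u = x u then H y else 0)
      = ∑ y : ∀ u, X u, if ∀ u ∈ W, y u = Function.update x v a u then H y else 0 := by
  apply Fintype.sum_bijective (fun y : ∀ u, X u => Function.update y v (Equiv.swap (x v) a (y v)))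
  · apply Function.Involutive.bijective
    intro y
    funext u
    rcases eq_or_ne u v with rfl | h
    · simp [Equiv.swap_apply_self]
    · simp [Function.update_of_ne h]
  · intro y
    have hc : (∀ u ∈ W, y u = x u) ↔
        (∀ u ∈ W, (Function.update y v (Equiv.swap (x v) a (y v))) u = Function.update x v a u) := by
      constructor
      · intro h u hu
        rcases eq_or_ne u v with rfl | hne
        · simp [h u hu]
        · simp [Function.update_of_ne hne, h u hu]
      · intro h u hu
        rcases eq_or_ne u v with rfl | hne
        · have h2 := h u hv
          simp at h2
          have : Equiv.swap (x u) a (y u) = Equiv.swap (x u) a (x u) := by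
            rw [h2, Equiv.swap_apply_left]
          exact (Equiv.swap (x u) a).injective this
        · have h2 := h u hu
          simpa [Function.update_of_ne hne] using h2
    have hH' := hH y (Equiv.swap (x v) a (y v))
    rw [hH']
    exact if_congr hc rfl rfl
lemma lemB {E : V → V → Prop} (hacyc : IsAcyclicDigraph E)
    (K : (v : V) → (∀ u, X u) → ℝ)
    (hsum : ∀ v x, ∑ a : X v, K v (Function.update x v a) = 1)
    (hdep : ∀ v x x', x v = x' v → (∀ u, E u v → x u = x' u) → K v x = K v x') :
    ∀ C : Finset V, ∀ T : Set V, (∀ w ∈ C, w ∉ T) →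
      ∀ G : (∀ u, X u) → ℝ, (∀ y y' : ∀ u, X u, (∀ u, u ∉ C → y u = y' u) → G y = G y') →
      ∀ x : ∀ u, X u,
      (∑ y : ∀ u, X u, if ∀ u ∈ T, y u = x u then (∏ w ∈ C, K w y) * G y else 0)
        = ∑ y : ∀ u, X u, if ∀ u ∈ T ∪ ↑C, y u = x u then G y else 0 := by
  intro C
  induction C using Finset.strongInduction with
  | _ C ih =>
    rcases C.eq_empty_or_nonempty with rfl | hne
    · intro T hT G hG x; simp
    · intro T hT G hG x
      obtain ⟨m, hmC, hsink⟩ := exists_sink hacyc C hne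
      set f : (∀ u, X u) → ℝ :=
        fun y => if ∀ u ∈ T, y u = x u then (∏ w ∈ C, K w y) * G y else 0 with hf
      have hmT : m ∉ T := hT m hmC
      rw [show (∑ y : ∀ u, X u, if ∀ u ∈ T, y u = x u then (∏ w ∈ C, K w y) * G y else 0)
          = ∑ z : ∀ u, X u, f z from rfl, ← sum_condense m (x m) f]
      have hstep : ∀ y : ∀ u, X u,
          (if y m = x m then ∑ a : X m, f (Function.update y m a) else 0)
            = if ∀ u ∈ (insert m T : Set V), y u = x u
                then (∏ w ∈ C.erase m, K w y) * G y else 0 := by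
        intro y
        have hcond : ∀ a : X m, (∀ u ∈ T, Function.update y m a u = x u) ↔ (∀ u ∈ T, y u = x u) := by
          intro a
          constructor
          · intro h u hu
            have hum : u ≠ m := fun h' => hmT (h' ▸ hu)
            simpa [Function.update_of_ne hum] using h u hu
          · intro h u hu
            have hum : u ≠ m := fun h' => hmT (h' ▸ hu)
            simpa [Function.update_of_ne hum] using h u hu
        have hval : ∀ a : X m, (∏ w ∈ C, K w (Function.update y m a)) * G (Function.update y m a)
            = K m (Function.update y m a) * ((∏ w ∈ C.erase m, K w y) * G y) := by
          intro a
          have hGa : G (Function.update y m a) = G y := by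
            apply hG
            intro u hu
            have : u ≠ m := fun h' => hu (h' ▸ hmC)
            simp [Function.update_of_ne this]
          have hKa : ∀ w ∈ C.erase m, K w (Function.update y m a) = K w y := by
            intro w hw
            have hwm : w ≠ m := (Finset.mem_erase.mp hw).1
            have hwC : w ∈ C := (Finset.mem_erase.mp hw).2
            apply hdep
            · simp [Function.update_of_ne hwm]
            · intro u hu
              have hum : u ≠ m := by
                rintro rfl
                exact hsink w hwC hu
              simp [Function.update_of_ne hum]
          rw [← Finset.mul_prod_erase C _ hmC, Finset.prod_congr rfl hKa, hGa, mul_assoc]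
        have hsum' : ∑ a : X m, f (Function.update y m a)
            = if ∀ u ∈ T, y u = x u then (∏ w ∈ C.erase m, K w y) * G y else 0 := by
          simp only [hf]
          by_cases hb : ∀ u ∈ T, y u = x u
          · rw [Finset.sum_congr rfl (fun a _ => by rw [if_pos ((hcond a).mpr hb), hval a])]
            rw [← Finset.sum_mul, hsum m y, one_mul, if_pos hb]
          · rw [Finset.sum_congr rfl (fun a _ => by rw [if_neg (fun h => hb ((hcond a).mp h))])]
            simp [hb]
        rw [hsum']
        by_cases hm : y m = x m
        · rw [if_pos hm]
          have : (∀ u ∈ (insert m T : Set V), y u = x u) ↔ (∀ u ∈ T, y u = x u) := by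
            constructor
            · intro h u hu; exact h u (Set.mem_insert_of_mem _ hu)
            · intro h u hu
              rcases hu with rfl | hu
              · exact hm
              · exact h u hu
          exact if_congr this.symm rfl rfl
        · rw [if_neg hm, eq_comm]
          rw [if_neg]
          intro h
          exact hm (h m (Set.mem_insert _ _))
      rw [Finset.sum_congr rfl fun y _ => hstep y]
      have hT' : ∀ w ∈ C.erase m, w ∉ (insert m T : Set V) := by
        intro w hw
        have hwm : w ≠ m := (Finset.mem_erase.mp hw).1
        have hwC : w ∈ C := (Finset.mem_erase.mp hw).2
        rintro (rfl | h)
        · exact hwm rfl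
        · exact hT w hwC h
      have hG' : ∀ y y' : ∀ u, X u, (∀ u, u ∉ C.erase m → y u = y' u) → G y = G y' := by
        intro y y' h
        exact hG y y' fun u hu => h u (fun h' => hu (Finset.mem_of_mem_erase h'))
      have hIH := ih (C.erase m) (Finset.erase_ssubset hmC) (insert m T) hT' G hG' x
      have hset : (insert m T : Set V) ∪ ↑(C.erase m) = T ∪ ↑C := by
        ext u
        simp only [Set.mem_union, Set.mem_insert_iff, Finset.coe_erase, Set.mem_diff,
          Finset.mem_coe, Set.mem_singleton_iff]
        constructor
        · rintro ((rfl | h) | ⟨h, _⟩)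
          · exact Or.inr hmC
          · exact Or.inl h
          · exact Or.inr h
        · rintro (h | h)
          · exact Or.inl (Or.inr h)
          · rcases eq_or_ne u m with rfl | hne
            · exact Or.inl (Or.inl rfl)
            · exact Or.inr ⟨h, hne⟩
      simp only [hset] at hIH
      refine Eq.trans ?_ hIH
      exact Finset.sum_congr rfl fun y _ => by
        by_cases h : ∀ u ∈ (insert m T : Set V), y u = x u <;> simp [h]

lemma sum_ite_univ_eq (c : ℝ) (x : ∀ v, X v) :
    (∑ y : ∀ v, X v, if ∀ u ∈ (Set.univ : Set V), y u = x u then c else 0) = c := by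
  have hpt : ∀ y : ∀ v, X v, (if ∀ u ∈ (Set.univ : Set V), y u = x u then c else 0)
      = if y = x then c else 0 := by
    intro y
    by_cases hy : y = x
    · subst hy; simp
    · rw [if_neg hy, if_neg]
      intro h'
      exact hy (funext fun u => h' u trivial)
  rw [Finset.sum_congr rfl fun y _ => hpt y]
  simp

lemma marg_anc {E : V → V → Prop} (hacyc : IsAcyclicDigraph E)
    (K : (v : V) → (∀ u, X u) → ℝ)
    (hsum : ∀ v x, ∑ a : X v, K v (Function.update x v a) = 1)
    (hdep : ∀ v x x', x v = x' v → (∀ u, E u v → x u = x' u) → K v x = K v x')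
    (P : (∀ v, X v) → ℝ) (hP : ∀ x, P x = ∏ w : V, K w x)
    (T : Set V) (hcl : ∀ w, w ∈ T → ∀ u, E u w → u ∈ T) (x : ∀ v, X v) :
    marg P T x = ∏ w : V, if w ∈ T then K w x else 1 := by
  unfold marg
  have hpt : ∀ y : ∀ v, X v, (if ∀ u ∈ T, y u = x u then P y else 0)
      = if ∀ u ∈ T, y u = x u then (∏ w ∈ T.toFinsetᶜ, K w y) * (∏ w ∈ T.toFinset, K w x) else 0 := by
    intro y
    by_cases hy : ∀ u ∈ T, y u = x u
    · rw [if_pos hy, if_pos hy, hP y, ← Finset.prod_mul_prod_compl T.toFinset]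
      rw [mul_comm]
      congr 1
      apply Finset.prod_congr rfl
      intro w hw
      have hwT : w ∈ T := Set.mem_toFinset.mp hw
      exact hdep w y x (hy w hwT) (fun u hu => hy u (hcl w hwT u hu))
    · rw [if_neg hy, if_neg hy]
  have hB := lemB hacyc K hsum hdep T.toFinsetᶜ T
      (fun w hw => by simpa [Set.mem_toFinset] using Finset.mem_compl.mp hw)
      (fun _ => ∏ w ∈ T.toFinset, K w x) (fun _ _ _ => rfl) x
  have huniv : T ∪ (↑(T.toFinsetᶜ : Finset V) : Set V) = Set.univ := by
    ext u
    simp only [Set.mem_union, Finset.coe_compl, Set.coe_toFinset, Set.mem_compl_iff,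
      Set.mem_univ, iff_true]
    tauto
  simp only [huniv] at hB
  have main := (Finset.sum_congr rfl fun y _ => hpt y).trans (hB.trans (sum_ite_univ_eq _ x))
  refine main.trans ?_
  have hfil : T.toFinset = Finset.univ.filter (fun w => w ∈ T) := by
    ext u; simp [Set.mem_toFinset]
  rw [hfil, Finset.prod_filter]

lemma marg_split (P : (∀ v, X v) → ℝ) (v : V) (S : Set V) (hv : v ∉ S) (x : ∀ u, X u) :
    marg P S x = ∑ a : X v, marg P ({v} ∪ S) (Function.update x v a) := by
  unfold marg
  rw [Finset.sum_comm]
  apply Finset.sum_congr rfl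
  intro y _
  have hpt : ∀ a : X v,
      (if ∀ u ∈ ({v} ∪ S : Set V), y u = Function.update x v a u then P y else 0)
        = if a = y v then (if ∀ u ∈ S, y u = x u then P y else 0) else 0 := by
    intro a
    have hiff : (∀ u ∈ ({v} ∪ S : Set V), y u = Function.update x v a u)
        ↔ (a = y v ∧ ∀ u ∈ S, y u = x u) := by
      constructor
      · intro h
        constructor
        · have := h v (Or.inl rfl)
          simp at this
          exact this.symm
        · intro u hu
          have hne : u ≠ v := fun h' => hv (h' ▸ hu)
          have := h u (Or.inr hu)
          simpa [Function.update_of_ne hne] using this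
      · rintro ⟨ha, hb⟩ u hu
        rcases hu with hu | hu
        · rcases hu with rfl
          simp [ha.symm]
        · have hne : u ≠ v := fun h' => hv (h' ▸ hu)
          simp [Function.update_of_ne hne, hb u hu]
    by_cases hB : ∀ u ∈ S, y u = x u <;> by_cases ha : a = y v
    · rw [if_pos (hiff.mpr ⟨ha, hB⟩), if_pos ha, if_pos hB]
    · rw [if_neg (fun h => ha (hiff.mp h).1), if_neg ha]
    · rw [if_neg (fun h => hB (hiff.mp h).2), if_pos ha, if_neg hB]
    · rw [if_neg (fun h => ha (hiff.mp h).1), if_neg ha]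
  have step : (∑ a : X v, if ∀ u ∈ ({v} ∪ S : Set V), y u = Function.update x v a u then P y else 0)
      = if ∀ u ∈ S, y u = x u then P y else 0 := by
    rw [Finset.sum_congr rfl fun a _ => hpt a]
    simp
  convert step.symm using 2 with a
  by_cases h : ∀ u ∈ ({v} ∪ S : Set V), y u = Function.update x v a u <;> simp [h]



lemma sum_ite_bridge {p q : (∀ v, X v) → Prop} {hp : ∀ y, Decidable (p y)}
    {hq : ∀ y, Decidable (q y)} (f g : (∀ v, X v) → ℝ) (hpq : ∀ y, p y ↔ q y)
    (hfg : ∀ y, p y → f y = g y) :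
    (∑ y : ∀ v, X v, @ite _ (p y) (hp y) (f y) 0)
      = ∑ y : ∀ v, X v, @ite _ (q y) (hq y) (g y) 0 := by
  apply Finset.sum_congr rfl
  intro y _
  by_cases h : p y
  · rw [if_pos h, if_pos ((hpq y).mp h)]; exact hfg y h
  · rw [if_neg h, if_neg fun h' => h ((hpq y).mpr h')]

lemma prod_ite_insert (K : (v : V) → (∀ u, X u) → ℝ) (v : V) (S T : Set V)
    (hST : ∀ w, w ∈ S ↔ (w = v ∨ w ∈ T)) (hv : v ∉ T) (x : ∀ u, X u) :
    (∏ w : V, if w ∈ S then K w x else 1) = K v x * ∏ w : V, if w ∈ T then K w x else 1 := by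
  rw [← Finset.mul_prod_erase Finset.univ (fun w => if w ∈ S then K w x else 1)
        (Finset.mem_univ v),
      ← Finset.mul_prod_erase Finset.univ (fun w => if w ∈ T then K w x else 1)
        (Finset.mem_univ v)]
  rw [if_pos ((hST v).mpr (Or.inl rfl)), if_neg hv, one_mul]
  congr 1
  apply Finset.prod_congr rfl
  intro w hw
  have hwv : w ≠ v := (Finset.mem_erase.mp hw).1
  by_cases hwT : w ∈ T
  · rw [if_pos hwT, if_pos ((hST w).mpr (Or.inr hwT))]
  · rw [if_neg hwT, if_neg (fun hS => by
      rcases (hST w).mp hS with h | h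
      exacts [hwv h, hwT h])]

theorem main_thm {E : V → V → Prop}
    (hacyc : IsAcyclicDigraph E) (P : (∀ v, X v) → ℝ)
    (K : (v : V) → (∀ u, X u) → ℝ)
    (hsum : ∀ v x, ∑ a : X v, K v (Function.update x v a) = 1)
    (hdep : ∀ v x x', x v = x' v → (∀ u, E u v → x u = x' u) → K v x = K v x')
    (hP : ∀ x, P x = ∏ w : V, K w x) (v : V) (x : ∀ u, X u) :
    marg P ({v} ∪ ({w | ¬ Relation.ReflTransGen E v w} \ Pa E v) ∪ Pa E v) x
        * marg P (Pa E v) x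
      = marg P ({v} ∪ Pa E v) x
        * marg P (({w | ¬ Relation.ReflTransGen E v w} \ Pa E v) ∪ Pa E v) x := by
  set N : Set V := {w | ¬ Relation.ReflTransGen E v w} with hNdef
  set D : Set V := {w | Relation.TransGen E v w} with hDdef
  have hvN : v ∉ N := fun h => h Relation.ReflTransGen.refl
  have hPaN : Pa E v ⊆ N := by
    intro u hu hvu
    exact hacyc v (Relation.TransGen.tail' hvu hu)
  have hvPa : v ∉ Pa E v := fun h => hacyc v (Relation.TransGen.single h)
  have hvD : v ∉ D := fun h => hacyc v h
  have hDN : ∀ w, w ∈ N → w ∉ D := fun w hw hd => hw hd.to_reflTransGen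
  have hNcl : ∀ w, w ∈ N → ∀ u, E u w → u ∈ N := fun w hw u hu hvu => hw (hvu.tail hu)
  have hBS : N \ Pa E v ∪ Pa E v = N := by
    rw [Set.diff_union_self]
    exact Set.union_eq_self_of_subset_right hPaN
  have hABS : {v} ∪ (N \ Pa E v) ∪ Pa E v = {v} ∪ N := by
    rw [Set.union_assoc, hBS]
  rw [hABS, hBS]
  -- ancestral computations
  have hvNcl : ∀ w, w ∈ ({v} ∪ N : Set V) → ∀ u, E u w → u ∈ ({v} ∪ N : Set V) := by
    rintro w (rfl | hw) u hu
    · exact Or.inr (hPaN hu)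
    · exact Or.inr (hNcl w hw u hu)
  have hancN := marg_anc hacyc K hsum hdep P hP N hNcl x
  have hancVN := marg_anc hacyc K hsum hdep P hP ({v} ∪ N) hvNcl x
  have h1 : marg P ({v} ∪ N) x = K v x * marg P N x := by
    rw [hancVN, hancN, prod_ite_insert K v ({v} ∪ N) N (fun w => by simp) hvN x]
  -- split of univ.erase v
  have hEr : Finset.univ.erase v = D.toFinset ∪ N.toFinset := by
    ext w
    simp only [Finset.mem_erase, Finset.mem_univ, and_true, Finset.mem_union, Set.mem_toFinset,
      hDdef, hNdef, Set.mem_setOf_eq]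
    constructor
    · intro hw
      by_cases h : Relation.TransGen E v w
      · exact Or.inl h
      · refine Or.inr (fun hr => ?_)
        rcases Relation.reflTransGen_iff_eq_or_transGen.mp hr with h' | ht
        · exact hw h'
        · exact h ht
    · rintro (h | h) hww
      · exact hacyc v (hww ▸ h)
      · exact h (hww ▸ Relation.ReflTransGen.refl)
  have hdisj : Disjoint D.toFinset N.toFinset := by
    rw [Finset.disjoint_left]
    intro w hwD hwN
    exact hDN w (Set.mem_toFinset.mp hwN) (Set.mem_toFinset.mp hwD)
  set Tv : Set V := {v} ∪ Pa E v with hTvdef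
  have hvTv : v ∈ Tv := Or.inl rfl
  set W : Set V := Tv ∪ D with hWdef
  have hvW : v ∈ W := Or.inl hvTv
  have hprod : ∀ y : ∀ u, X u, (∏ w : V, K w y)
      = K v y * ((∏ w ∈ D.toFinset, K w y) * (∏ w ∈ N.toFinset, K w y)) := by
    intro y
    rw [← Finset.mul_prod_erase Finset.univ (fun w => K w y) (Finset.mem_univ v), hEr,
        Finset.prod_union hdisj]
  have hGD : ∀ y y' : ∀ u, X u, (∀ u, u ∉ D.toFinset → y u = y' u)
      → (∏ w ∈ N.toFinset, K w y) = ∏ w ∈ N.toFinset, K w y' := by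
    intro y y' h
    apply Finset.prod_congr rfl
    intro w hw
    have hwN : w ∈ N := Set.mem_toFinset.mp hw
    apply hdep
    · exact h w (by simp [Set.mem_toFinset, hDN w hwN])
    · intro u hu
      apply h u
      simp only [Set.mem_toFinset]
      intro huD
      exact hDN w hwN (huD.tail hu)
  have hGv : ∀ (y : ∀ u, X u) (a : X v),
      (∏ w ∈ N.toFinset, K w (Function.update y v a)) = ∏ w ∈ N.toFinset, K w y := by
    intro y a
    apply Finset.prod_congr rfl
    intro w hw
    have hwN : w ∈ N := Set.mem_toFinset.mp hw
    have hwv : w ≠ v := fun h => hvN (h ▸ hwN)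
    apply hdep
    · simp [Function.update_of_ne hwv]
    · intro u hu
      have huv : u ≠ v := by
        rintro rfl
        exact hwN (Relation.ReflTransGen.single hu)
      simp [Function.update_of_ne huv]
  have hTd : ∀ w ∈ D.toFinset, w ∉ Tv := by
    intro w hw
    have hwD : w ∈ D := Set.mem_toFinset.mp hw
    rintro (rfl | hpa)
    · exact hvD hwD
    · exact hacyc v (hwD.tail hpa)
  -- (a) marg over Tv in terms of the key sum
  have haveA : ∀ z : ∀ u, X u, marg P Tv z
      = K v z * ∑ y : ∀ u, X u, if ∀ u ∈ Tv, y u = z u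
          then (∏ w ∈ D.toFinset, K w y) * (∏ w ∈ N.toFinset, K w y) else 0 := by
    intro z
    unfold marg
    rw [Finset.mul_sum]
    apply Finset.sum_congr rfl
    intro y _
    by_cases hy : ∀ u ∈ Tv, y u = z u
    · rw [if_pos hy, if_pos hy, hP y, hprod y,
        hdep v y z (hy v hvTv) (fun u hu => hy u (Or.inr hu))]
    · rw [if_neg hy, if_neg hy, mul_zero]
  -- (b) sum out the descendants
  have haveB : ∀ z : ∀ u, X u,
      (∑ y : ∀ u, X u, if ∀ u ∈ Tv, y u = z u
          then (∏ w ∈ D.toFinset, K w y) * (∏ w ∈ N.toFinset, K w y) else 0)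
        = ∑ y : ∀ u, X u, if ∀ u ∈ W, y u = z u then (∏ w ∈ N.toFinset, K w y) else 0 := by
    intro z
    have hB := lemB hacyc K hsum hdep D.toFinset Tv hTd
      (fun y => ∏ w ∈ N.toFinset, K w y) hGD z
    refine Eq.trans ?_ (hB.trans ?_)
    · exact sum_ite_bridge _ _ (fun y => Iff.rfl) (fun y _ => rfl)
    · refine sum_ite_bridge _ _ (fun y => ?_) (fun y _ => rfl)
      have hmem : ∀ u : V, u ∈ Tv ∪ (↑(D.toFinset) : Set V) ↔ u ∈ W := by
        intro u
        rw [hWdef]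
        simp [Set.coe_toFinset]
      constructor
      · intro h u hu; exact h u ((hmem u).mpr hu)
      · intro h u hu; exact h u ((hmem u).mp hu)
  -- (c) invariance in the v-coordinate
  have haveC : ∀ a : X v,
      (∑ y : ∀ u, X u, if ∀ u ∈ W, y u = Function.update x v a u
          then (∏ w ∈ N.toFinset, K w y) else 0)
        = ∑ y : ∀ u, X u, if ∀ u ∈ W, y u = x u then (∏ w ∈ N.toFinset, K w y) else 0 := by
    intro a
    have h := sum_constraint_update v W hvW (fun y => ∏ w ∈ N.toFinset, K w y) hGv x a
    refine Eq.trans ?_ (h.symm.trans ?_) <;>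
      exact sum_ite_bridge _ _ (fun y => Iff.rfl) (fun y _ => rfl)
  have hSinv : ∀ a : X v,
      (∑ y : ∀ u, X u, if ∀ u ∈ Tv, y u = Function.update x v a u
          then (∏ w ∈ D.toFinset, K w y) * (∏ w ∈ N.toFinset, K w y) else 0)
        = ∑ y : ∀ u, X u, if ∀ u ∈ Tv, y u = x u
            then (∏ w ∈ D.toFinset, K w y) * (∏ w ∈ N.toFinset, K w y) else 0 := by
    intro a
    exact (haveB _).trans ((haveC a).trans (haveB x).symm)
  have hPaEq : marg P (Pa E v) x = ∑ y : ∀ u, X u, if ∀ u ∈ Tv, y u = x u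
      then (∏ w ∈ D.toFinset, K w y) * (∏ w ∈ N.toFinset, K w y) else 0 := by
    rw [marg_split P v (Pa E v) hvPa x, ← hTvdef]
    rw [Finset.sum_congr rfl fun (a : X v) _ =>
      (haveA (Function.update x v a)).trans (by rw [hSinv a])]
    rw [← Finset.sum_mul, hsum v x, one_mul]
  have h2 : marg P Tv x = K v x * marg P (Pa E v) x := by
    rw [hPaEq, haveA x]
  rw [h1, h2]
  ring

end

/-- Soundness of the local Markov property: if a joint distribution on finite sets
factorizes according to a finite DAG, then each variable is conditionally independent
of its non-descendants (excluding its parents) given its parents. -/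
theorem factorizes_implies_localMarkov {V : Type} [Fintype V] [DecidableEq V]
    {X : V → Type} [∀ v, Fintype (X v)] (E : V → V → Prop)
    (hacyc : IsAcyclicDigraph E) (P : (∀ v, X v) → ℝ)
    (hfac : Factorizes E P) :
    ∀ v : V,
      CondIndep P {v} ({w | ¬ Relation.ReflTransGen E v w} \ Pa E v) (Pa E v) := by
  obtain ⟨K, hpos, hsum, hdep, hP⟩ := hfac
  intro v x
  exact main_thm hacyc P K hsum hdep hP v x
end

section
/- Let G be a finite DAG whose vertices are partitioned into three disjoint sets X, Y, Z such that X and Y are d-separated by Z (classical d-separation). Then for every vertex v of G, either ({v} ∪ Pa(v)) ⊆ X ∪ Z or ({v} ∪ Pa(v)) ⊆ Y ∪ Z. -/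
open Classical

/- If `v` and its parents met both `X` and `Y`, there would be an `X`-vertex `a` and a `Y`-vertex `b`
among them. Either they are joined by an edge, a path of length one that nothing can block, or
`a → v ← b` with `v ∈ Z`: a collider at a vertex of `Z` which, by acyclicity, is neither a chain
nor a fork, so the path `a, v, b` is not blocked either. -/

lemma IsAcyclicDigraph.not_adj_symm {V : Type} {E : V → V → Prop} (hacyc : IsAcyclicDigraph E)
    {u v : V} (huv : E u v) : ¬ E v u :=
  fun hvu => hacyc u (.head huv (.single hvu))

lemma Blocked.two_lt_length {V : Type} {E : V → V → Prop} {Z : Set V} {p : List V}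
    (hp : Blocked E Z p) : 2 < p.length := by
  obtain ⟨i, -, -, b, -, -, hb, -⟩ := hp
  have := (List.getElem?_eq_some_iff.mp hb).1
  omega

section DSep

variable {V : Type} {E : V → V → Prop} {X Y Z : Set V}

lemma DSep.not_adj (hsep : DSep E X Y Z) {x y : V} (hx : x ∈ X) (hy : y ∈ Y) (hxy : x ≠ y) :
    ¬ (E x y ∨ E y x) := fun hadj =>
  (hsep [x, y] (by show List.IsChain _ _; simpa using hadj) (by simpa using hxy)
    ⟨x, hx, rfl⟩ ⟨y, hy, rfl⟩).two_lt_length.ne rfl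

lemma DSep.not_collider (hacyc : IsAcyclicDigraph E) (hsep : DSep E X Y Z) {x y z : V}
    (hx : x ∈ X) (hy : y ∈ Y) (hz : z ∈ Z) (hxy : x ≠ y) (hxz : x ≠ z) (hyz : y ≠ z)
    (hxz_edge : E x z) (hyz_edge : E y z) : False := by
  have hwalk : IsUWalk E [x, z, y] := by
    show List.IsChain _ _; simp [hxz_edge, hyz_edge]
  have hnodup : [x, z, y].Nodup := by simp [hxy, hxz, hyz.symm]
  obtain ⟨i, a, m, b, ha, hm, hb, hblock⟩ := hsep _ hwalk hnodup ⟨x, hx, rfl⟩ ⟨y, hy, rfl⟩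
  obtain rfl : i = 0 := by
    have := (List.getElem?_eq_some_iff.mp hb).1
    simp only [List.length_cons, List.length_nil] at this
    omega
  simp only [List.getElem?_cons_zero, List.getElem?_cons_succ, Option.some.injEq] at ha hm hb
  subst ha hm hb
  have hzx := hacyc.not_adj_symm hxz_edge
  have hzy := hacyc.not_adj_symm hyz_edge
  have hzAn : z ∈ An E Z := ⟨z, hz, .refl⟩
  tauto

end DSep

theorem dsep_vertex_parents_dichotomy_general {V : Type}
    (E : V → V → Prop) (hacyc : IsAcyclicDigraph E)
    (X Y Z : Set V)
    (hcover : X ∪ Y ∪ Z = Set.univ)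
    (hsep : DSep E X Y Z) :
    ∀ v : V, ({v} ∪ Pa E v ⊆ X ∪ Z) ∨ ({v} ∪ Pa E v ⊆ Y ∪ Z) := by
  intro v
  by_contra! h
  obtain ⟨⟨b, hb, hbXZ⟩, ⟨a, ha, haYZ⟩⟩ := And.imp Set.not_subset.mp Set.not_subset.mp h
  have hmem : ∀ w, w ∈ X ∪ Y ∪ Z := fun w => hcover ▸ Set.mem_univ w
  simp only [Set.mem_union, not_or] at haYZ hbXZ
  have haX : a ∈ X := by rcases hmem a with (h | h) | h <;> tauto
  have hbY : b ∈ Y := by rcases hmem b with (h | h) | h <;> tauto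
  have hab : a ≠ b := (ne_of_mem_of_not_mem hbY haYZ.1).symm
  rcases ha with rfl | hav <;> rcases hb with rfl | hbv
  · exact hab rfl
  · exact hsep.not_adj haX hbY hab (.inr hbv)
  · exact hsep.not_adj haX hbY hab (.inl hav)
  · rcases hmem v with (hvX | hvY) | hvZ
    · exact hsep.not_adj hvX hbY (ne_of_mem_of_not_mem hvX hbXZ.1) (.inr hbv)
    · exact hsep.not_adj haX hvY (ne_of_mem_of_not_mem hvY haYZ.1).symm (.inl hav)
    · exact hsep.not_collider hacyc haX hbY hvZ hab (ne_of_mem_of_not_mem hvZ haYZ.2).symm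
        (ne_of_mem_of_not_mem hvZ hbXZ.2).symm hav hbv

/-- Lemma 6.4 of Fritz–Klingler for DAGs: if the vertices of a finite DAG are
partitioned into disjoint sets `X`, `Y`, `Z` with `X` and `Y` d-separated by `Z`,
then every vertex together with its parents lies entirely in `X ∪ Z` or entirely in
`Y ∪ Z`. -/
theorem dsep_vertex_parents_dichotomy {V : Type} [Fintype V] [DecidableEq V]
    (E : V → V → Prop) (hacyc : IsAcyclicDigraph E)
    (X Y Z : Set V)
    (hXY : Disjoint X Y) (hXZ : Disjoint X Z) (hYZ : Disjoint Y Z)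
    (hcover : X ∪ Y ∪ Z = Set.univ)
    (hsep : DSep E X Y Z) :
    ∀ v : V, ({v} ∪ Pa E v ⊆ X ∪ Z) ∨ ({v} ∪ Pa E v ⊆ Y ∪ Z) :=
  dsep_vertex_parents_dichotomy_general E hacyc X Y Z hcover hsep
end

section
/- Let G be a finite DAG with vertices partitioned into disjoint sets X, Y, Z. Define the cut graph H: delete all vertices in Z, and connect two remaining vertices u, w by an undirected edge whenever some vertex v of G (possibly in Z) has both u and w among {v} ∪ Pa(v). Then X and Y are d-separated by Z in G (classical d-separation) if and only if, after restricting G to An(X ∪ Y ∪ Z) and forming the cut graph, no vertex of X is connected to a vertex of Y. -/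
open Classical

/-! Both sides say that no active walk, i.e. no walk all of whose interior triples are active,
joins `X` to `Y`. For d-separation this needs active walks to be made simple: a loop at a repeated
vertex can be cut out, because a collider created at the junction is an ancestor of `Z` (otherwise
the loop would contain a directed cycle). For the cut graph: every vertex of an active walk between
`X` and `Y` lies in `An (X ∪ Y ∪ Z)`, and stepping from non-collider to non-collider, jumping across
each collider through the common child, turns the walk into a path of the cut graph; conversely a
path of the cut graph lifts step by step to an active walk. -/

open Relation

theorem List.exists_eq_append_cons_append_cons_of_not_nodup {α : Type*} {l : List α}
    (h : ¬l.Nodup) : ∃ l₁ a l₂ l₃, l = l₁ ++ a :: (l₂ ++ a :: l₃) := by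
  induction l with
  | nil => exact absurd List.nodup_nil h
  | cons b t ih =>
    by_cases hb : b ∈ t
    · obtain ⟨l₂, l₃, rfl⟩ := List.append_of_mem hb
      exact ⟨[], b, l₂, l₃, rfl⟩
    · obtain ⟨l₁, a, l₂, l₃, rfl⟩ := ih fun ht => h (List.nodup_cons.2 ⟨hb, ht⟩)
      exact ⟨b :: l₁, a, l₂, l₃, rfl⟩

section

variable {V : Type} {E : V → V → Prop} {Z : Set V}

theorem IsAcyclicDigraph.asymm (h : IsAcyclicDigraph E) ⦃a b : V⦄ (hab : E a b) : ¬E b a :=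
  fun hba => h a (.head hab (.single hba))

theorem subset_An (W : Set V) : W ⊆ An E W := fun w hw => ⟨w, hw, .refl⟩

theorem An_mono {W W' : Set V} (h : W ⊆ W') : An E W ⊆ An E W' :=
  fun _ ⟨w, hw, huw⟩ => ⟨w, h hw, huw⟩

theorem mem_An_of_reflTransGen {W : Set V} {u v : V} (huv : ReflTransGen E u v)
    (hv : v ∈ An E W) : u ∈ An E W :=
  let ⟨w, hw, hvw⟩ := hv
  ⟨w, hw, huv.trans hvw⟩

theorem mem_An_of_edge {W : Set V} {u v : V} (huv : E u v) (hv : v ∈ An E W) : u ∈ An E W :=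
  mem_An_of_reflTransGen (.single huv) hv

variable (E Z) in
def IsActiveTriple (a m b : V) : Prop :=
  (E a m ∧ E b m) ∧ m ∈ An E Z ∨ ¬(E a m ∧ E b m) ∧ m ∉ Z

theorem IsActiveTriple.of_collider {a m b : V} (ham : E a m) (hbm : E b m) (hm : m ∈ An E Z) :
    IsActiveTriple E Z a m b :=
  Or.inl ⟨⟨ham, hbm⟩, hm⟩

theorem IsActiveTriple.of_not_collider {a m b : V} (hc : ¬(E a m ∧ E b m)) (hm : m ∉ Z) :
    IsActiveTriple E Z a m b :=
  Or.inr ⟨hc, hm⟩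

theorem IsActiveTriple.symm {a m b : V} (h : IsActiveTriple E Z a m b) :
    IsActiveTriple E Z b m a := by
  unfold IsActiveTriple at *
  tauto

theorem IsActiveTriple.mem_An {a m b : V} (h : IsActiveTriple E Z a m b) (ham : E a m)
    (hbm : E b m) : m ∈ An E Z := by
  unfold IsActiveTriple at h
  tauto

theorem IsActiveTriple.not_mem {a m b : V} (h : IsActiveTriple E Z a m b)
    (hc : ¬(E a m ∧ E b m)) : m ∉ Z := by
  unfold IsActiveTriple at h
  tauto

variable (E Z) in
def ActiveWalk : List V → Prop
  | a :: m :: l => (E a m ∨ E m a) ∧ (∀ b ∈ l.head?, IsActiveTriple E Z a m b) ∧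
      ActiveWalk (m :: l)
  | _ => True

theorem activeWalk_singleton (a : V) : ActiveWalk E Z [a] := trivial

theorem activeWalk_cons_cons {a m : V} {l : List V} :
    ActiveWalk E Z (a :: m :: l) ↔ (E a m ∨ E m a) ∧ (∀ b ∈ l.head?, IsActiveTriple E Z a m b) ∧
      ActiveWalk E Z (m :: l) := by
  rw [ActiveWalk]

theorem activeWalk_pair {a b : V} : ActiveWalk E Z [a, b] ↔ E a b ∨ E b a := by
  simp [activeWalk_cons_cons, activeWalk_singleton]

theorem ActiveWalk.tail {a : V} {l : List V} (h : ActiveWalk E Z (a :: l)) :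
    ActiveWalk E Z l := by
  cases l with
  | nil => trivial
  | cons m l => exact h.2.2

theorem ActiveWalk.adj_head {a m : V} {l : List V} (h : ActiveWalk E Z (a :: m :: l)) :
    E a m ∨ E m a :=
  h.1

theorem ActiveWalk.isActiveTriple_head {a m b : V} {l : List V}
    (h : ActiveWalk E Z (a :: m :: b :: l)) : IsActiveTriple E Z a m b :=
  h.2.1 b rfl

theorem ActiveWalk.right_of_append {l₁ l₂ : List V} (h : ActiveWalk E Z (l₁ ++ l₂)) :
    ActiveWalk E Z l₂ := by
  induction l₁ with
  | nil => exact h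
  | cons a l₁ ih => exact ih h.tail

theorem ActiveWalk.left_of_append : ∀ {l₁ l₂ : List V},
    ActiveWalk E Z (l₁ ++ l₂) → ActiveWalk E Z l₁
  | [], _, _ | [_], _, _ => trivial
  | a :: m :: l, l₂, h => by
    refine ⟨h.1, fun b hb => h.2.1 b ?_, ActiveWalk.left_of_append (l₂ := l₂) h.2.2⟩
    simp_all [List.head?_append]

theorem ActiveWalk.infix {l₁ l₂ : List V} (h : ActiveWalk E Z l₂) (h₁₂ : l₁ <:+: l₂) :
    ActiveWalk E Z l₁ := by
  obtain ⟨s, t, rfl⟩ := h₁₂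
  exact (ActiveWalk.right_of_append (l₁ := s) (by simpa using h)).left_of_append

theorem ActiveWalk.isActiveTriple {l₁ l₂ : List V} {a m b : V}
    (h : ActiveWalk E Z (l₁ ++ m :: l₂)) (ha : l₁.getLast? = some a) (hb : l₂.head? = some b) :
    IsActiveTriple E Z a m b := by
  obtain ⟨l₁, rfl⟩ := List.getLast?_eq_some_iff.1 ha
  obtain ⟨l₂, rfl⟩ : ∃ l, l₂ = b :: l := List.head?_eq_some_iff.1 hb
  exact (h.infix (l₁ := [a, m, b]) ⟨l₁, l₂, by simp⟩).isActiveTriple_head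

theorem ActiveWalk.append_cons : ∀ {l₁ : List V} {m : V} {l₂ : List V},
    ActiveWalk E Z (l₁ ++ [m]) → ActiveWalk E Z (m :: l₂) →
    (∀ a b, l₁.getLast? = some a → l₂.head? = some b → IsActiveTriple E Z a m b) →
    ActiveWalk E Z (l₁ ++ m :: l₂)
  | [], _, _, _, h₂, _ => h₂
  | [a], m, l₂, h₁, h₂, hm => ⟨h₁.1, fun b hb => hm a b rfl hb, h₂⟩
  | a :: c :: l₁, m, l₂, h₁, h₂, hm => by
    refine ⟨h₁.1, fun b hb => h₁.2.1 b ?_,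
      show ActiveWalk E Z ((c :: l₁) ++ m :: l₂) from
        ActiveWalk.append_cons h₁.2.2 h₂ fun a' b' ha' hb' => ?_⟩
    · cases l₁ <;> simp_all
    · exact hm a' b' (by simpa using ha') hb'

theorem ActiveWalk.reverse : ∀ {l : List V}, ActiveWalk E Z l → ActiveWalk E Z l.reverse
  | [], _ | [_], _ => trivial
  | a :: m :: l, h => by
    have hrev := ActiveWalk.append_cons (l₁ := l.reverse) (l₂ := [a])
      (by simpa using h.tail.reverse) (activeWalk_pair.2 h.adj_head.symm)
      (fun b a' hb ha' => by
        rw [List.getLast?_reverse] at hb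
        cases ha'
        exact (h.2.1 b hb).symm)
    simpa using hrev

theorem ActiveWalk.mem_An_or_transGen {a m y : V} : ∀ {l : List V},
    ActiveWalk E Z (a :: m :: l) → E a m → (m :: l).getLast? = some y →
      a ∈ An E Z ∨ TransGen E a y
  | [], _, ham, hy => by
    obtain rfl : m = y := by simpa using hy
    exact Or.inr (.single ham)
  | b :: l, h, ham, hy => by
    by_cases hbm : E b m
    · exact Or.inl (mem_An_of_edge ham (h.isActiveTriple_head.mem_An ham hbm))
    · rcases h.tail.mem_An_or_transGen (h.tail.adj_head.resolve_right hbm) (by simpa using hy)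
        with hm | hmy
      · exact Or.inl (mem_An_of_edge ham hm)
      · exact Or.inr (.head ham hmy)

theorem ActiveWalk.forall_mem_An {W : Set V} (hZW : Z ⊆ W) : ∀ {l : List V} {x y : V},
    ActiveWalk E Z l → l.head? = some x → l.getLast? = some y → x ∈ An E W → y ∈ An E W →
      ∀ v ∈ l, v ∈ An E W
  | [], _, _, _, hx, _, _, _ => by simp at hx
  | [a], _, _, _, hx, _, hxW, _ => by
    obtain rfl : a = _ := by simpa using hx
    simpa using hxW
  | a :: m :: l, x, y, h, hx, hy, hxW, hyW => by
    obtain rfl : a = x := by simpa using hx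
    have hmW : m ∈ An E W := by
      rcases h.adj_head with ham | hma
      · rcases l with _ | ⟨b, l⟩
        · obtain rfl : m = y := by simpa using hy
          exact hyW
        by_cases hbm : E b m
        · exact An_mono hZW (h.isActiveTriple_head.mem_An ham hbm)
        rcases h.tail.mem_An_or_transGen (h.tail.adj_head.resolve_right hbm) (by simpa using hy)
          with hm | hmy
        · exact An_mono hZW hm
        · exact mem_An_of_reflTransGen hmy.to_reflTransGen hyW
      · exact mem_An_of_edge hma hxW
    rintro v (_ | ⟨_, hv⟩)
    · exact hxW
    · exact h.tail.forall_mem_An hZW rfl (by simpa using hy) hmW hyW v hv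

theorem ActiveWalk.shortcut (hacyc : IsAcyclicDigraph E) {l₁ l₂ l₃ : List V} {m : V}
    (h : ActiveWalk E Z (l₁ ++ m :: (l₂ ++ m :: l₃))) : ActiveWalk E Z (l₁ ++ m :: l₃) := by
  obtain ⟨b₁, r, hr⟩ := List.exists_cons_of_ne_nil (List.concat_ne_nil m l₂)
  have hloop : ActiveWalk E Z (m :: b₁ :: r) := hr ▸ h.infix ⟨l₁, l₃, by simp⟩
  have hloop_last : (b₁ :: r).getLast? = some m := by simp [← hr]
  have hb₁ : (l₂ ++ m :: l₃).head? = some b₁ := by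
    rw [show l₂ ++ m :: l₃ = l₂ ++ [m] ++ l₃ by simp, hr]
    rfl
  obtain ⟨a₂, ha₂⟩ : ∃ a₂, (l₁ ++ m :: l₂).getLast? = some a₂ :=
    Option.isSome_iff_exists.1 (by simp [List.getLast?_isSome])
  refine .append_cons (ActiveWalk.left_of_append (l₂ := l₂ ++ m :: l₃) (by simpa using h))
    (ActiveWalk.right_of_append (l₁ := l₁ ++ m :: l₂) (by simpa using h)) fun a b ha hb => ?_
  have h₁ : IsActiveTriple E Z a m b₁ := h.isActiveTriple ha hb₁
  have h₂ : IsActiveTriple E Z a₂ m b :=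
    ActiveWalk.isActiveTriple (by simpa using h) ha₂ hb
  by_cases hc : E a m ∧ E b m
  · refine .of_collider hc.1 hc.2 (by_contra fun hm => ?_)
    have hmb₁ : E m b₁ := hloop.adj_head.resolve_right fun hb₁m => hm (h₁.mem_An hc.1 hb₁m)
    rcases hloop.mem_An_or_transGen hmb₁ hloop_last with hmZ | hcyc
    · exact hm hmZ
    · exact hacyc m hcyc
  · refine .of_not_collider hc ?_
    rcases not_and_or.1 hc with ham | hbm
    · exact h₁.not_mem fun hc' => ham hc'.1
    · exact h₂.not_mem fun hc' => hbm hc'.2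

theorem ActiveWalk.exists_nodup (hacyc : IsAcyclicDigraph E) {x y : V} (l : List V)
    (h : ActiveWalk E Z l) (hx : l.head? = some x) (hy : l.getLast? = some y) :
    ∃ l', ActiveWalk E Z l' ∧ l'.Nodup ∧ l'.head? = some x ∧ l'.getLast? = some y := by
  by_cases hl : l.Nodup
  · exact ⟨l, h, hl, hx, hy⟩
  obtain ⟨l₁, m, l₂, l₃, hl⟩ := List.exists_eq_append_cons_append_cons_of_not_nodup hl
  rw [hl, show l₁ ++ m :: (l₂ ++ m :: l₃) = (l₁ ++ m :: l₂) ++ m :: l₃ by simp] at hy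
  subst hl
  refine ActiveWalk.exists_nodup hacyc _ (h.shortcut hacyc) (by simpa using hx) ?_
  rwa [List.getLast?_append_of_ne_nil _ (List.cons_ne_nil _ _)] at hy ⊢
termination_by l.length
decreasing_by all_goals simp_all

section Blocking

variable (E Z) in
def IsBlockingTriple (a m b : V) : Prop :=
  ((E a m ∧ E m b) ∨ (E m a ∧ E b m) ∨ (E m a ∧ E m b)) ∧ m ∈ Z ∨ (E a m ∧ E b m) ∧ m ∉ An E Z

theorem isUWalk_cons_cons {a m : V} {l : List V} :
    IsUWalk E (a :: m :: l) ↔ (E a m ∨ E m a) ∧ IsUWalk E (m :: l) :=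
  List.isChain_cons_cons

theorem not_blocked_nil : ¬Blocked E Z [] := by
  rintro ⟨i, _, _, _, h, -⟩
  simp at h

theorem not_blocked_singleton (a : V) : ¬Blocked E Z [a] := by
  rintro ⟨i, _, _, _, -, h, -⟩
  simp at h

theorem blocked_cons_cons_iff {a m : V} {l : List V} :
    Blocked E Z (a :: m :: l) ↔
      (∃ b ∈ l.head?, IsBlockingTriple E Z a m b) ∨ Blocked E Z (m :: l) := by
  constructor
  · rintro ⟨_ | i, a', m', b', h₀, h₁, h₂, hb⟩
    · simp only [List.getElem?_cons_zero, Option.some.injEq, zero_add,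
        List.getElem?_cons_succ] at h₀ h₁ h₂
      subst h₀ h₁
      exact Or.inl ⟨b', by simpa [List.head?_eq_getElem?] using h₂, hb⟩
    · exact Or.inr ⟨i, a', m', b', by simpa using h₀, by simpa using h₁, by simpa using h₂, hb⟩
  · rintro (⟨b, hb, hbl⟩ | ⟨i, a', m', b', h₀, h₁, h₂, hb⟩)
    · exact ⟨0, a, m, b, rfl, rfl, by simpa [List.head?_eq_getElem?] using hb, hbl⟩
    · exact ⟨i + 1, a', m', b', by simpa using h₀, by simpa using h₁, by simpa using h₂, hb⟩

variable (hE : ∀ ⦃a b : V⦄, E a b → ¬E b a)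
include hE

theorem isActiveTriple_iff_not_isBlockingTriple {a m b : V} (ham : E a m ∨ E m a)
    (hmb : E m b ∨ E b m) : IsActiveTriple E Z a m b ↔ ¬IsBlockingTriple E Z a m b := by
  have := @hE a m
  have := @hE m b
  unfold IsActiveTriple IsBlockingTriple
  tauto

theorem activeWalk_iff_isUWalk_and_not_blocked :
    ∀ {l : List V}, ActiveWalk E Z l ↔ IsUWalk E l ∧ ¬Blocked E Z l
  | [] => iff_of_true trivial ⟨List.isChain_nil, not_blocked_nil⟩
  | [a] => iff_of_true trivial ⟨List.isChain_singleton a, not_blocked_singleton a⟩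
  | a :: m :: l => by
    have hedge : ∀ b ∈ l.head?, IsUWalk E (m :: l) → E m b ∨ E b m := fun b hb hw => by
      obtain ⟨l, rfl⟩ := List.head?_eq_some_iff.1 hb
      exact (isUWalk_cons_cons.1 hw).1
    simp only [activeWalk_cons_cons, activeWalk_iff_isUWalk_and_not_blocked (l := m :: l),
      isUWalk_cons_cons, blocked_cons_cons_iff, not_or, not_exists, not_and]
    constructor
    · rintro ⟨ham, htr, hw, hnb⟩
      exact ⟨⟨ham, hw⟩, fun b hb =>
        (isActiveTriple_iff_not_isBlockingTriple hE ham (hedge b hb hw)).1 (htr b hb), hnb⟩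
    · rintro ⟨⟨ham, hw⟩, hbl, hnb⟩
      exact ⟨ham, fun b hb =>
        (isActiveTriple_iff_not_isBlockingTriple hE ham (hedge b hb hw)).2 (hbl b hb), hw, hnb⟩

end Blocking

variable (E Z) in
def ActivelyConnected (X Y : Set V) : Prop :=
  ∃ l x y, x ∈ X ∧ y ∈ Y ∧ ActiveWalk E Z l ∧ l.head? = some x ∧ l.getLast? = some y

theorem dsep_iff_not_activelyConnected (hacyc : IsAcyclicDigraph E) {X Y : Set V} :
    DSep E X Y Z ↔ ¬ActivelyConnected E Z X Y := by
  have hactive (l : List V) : ActiveWalk E Z l ↔ IsUWalk E l ∧ ¬Blocked E Z l :=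
    activeWalk_iff_isUWalk_and_not_blocked hacyc.asymm
  constructor
  · rintro hd ⟨l, x, y, hx, hy, h, hlx, hly⟩
    obtain ⟨l', h', hnd, hlx', hly'⟩ := h.exists_nodup hacyc l hlx hly
    exact ((hactive l').1 h').2 (hd l' ((hactive l').1 h').1 hnd ⟨x, hx, hlx'⟩ ⟨y, hy, hly'⟩)
  · intro hnc l hw hnd ⟨x, hx, hlx⟩ ⟨y, hy, hly⟩
    by_contra hb
    exact hnc ⟨l, x, y, hx, hy, (hactive l).2 ⟨hw, hb⟩, hlx, hly⟩

variable (E Z) in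
def CutAdj (A : Set V) (u w : V) : Prop :=
  u ∈ A \ Z ∧ w ∈ A \ Z ∧ ∃ v ∈ A, (u = v ∨ E u v) ∧ (w = v ∨ E w v)

section CutGraph

variable {A : Set V} {u w : V}

theorem CutAdj.of_adj (hu : u ∈ A \ Z) (hw : w ∈ A \ Z) (huw : E u w ∨ E w u) :
    CutAdj E Z A u w := by
  refine ⟨hu, hw, ?_⟩
  rcases huw with huw | hwu
  · exact ⟨w, hw.1, Or.inr huw, Or.inl rfl⟩
  · exact ⟨u, hu.1, Or.inl rfl, Or.inr hwu⟩

theorem CutAdj.of_collider {m : V} (hu : u ∈ A \ Z) (hw : w ∈ A \ Z) (hm : m ∈ A) (hum : E u m)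
    (hwm : E w m) : CutAdj E Z A u w :=
  ⟨hu, hw, m, hm, Or.inr hum, Or.inr hwm⟩

theorem ActiveWalk.reflTransGen_cutAdj (hE : ∀ ⦃a b : V⦄, E a b → ¬E b a) :
    ∀ {l : List V} {x y : V}, ActiveWalk E Z l → l.head? = some x → l.getLast? = some y →
      x ∉ Z → y ∉ Z → (∀ v ∈ l, v ∈ A) → ReflTransGen (CutAdj E Z A) x y
  | [], _, _, _, hx, _, _, _, _ => by simp at hx
  | [a], x, y, _, hx, hy, _, _, _ => by
    obtain rfl : a = x := by simpa using hx
    obtain rfl : a = y := by simpa using hy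
    exact .refl
  | a :: m :: l, x, y, h, hx, hy, hxZ, hyZ, hA => by
    obtain rfl : a = x := by simpa using hx
    have hyl : (m :: l).getLast? = some y := by simpa using hy
    rcases l with _ | ⟨b, l⟩
    · obtain rfl : m = y := by simpa using hy
      exact .single (.of_adj ⟨hA a (by simp), hxZ⟩ ⟨hA m (by simp), hyZ⟩ h.adj_head)
    by_cases hc : E a m ∧ E b m
    · have hbZ : b ∉ Z := by
        rcases l with _ | ⟨c, l⟩
        · obtain rfl : b = y := by simpa using hy
          exact hyZ
        · exact h.tail.isActiveTriple_head.not_mem fun hc' => hE hc.2 hc'.1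
      exact .head (.of_collider ⟨hA a (by simp), hxZ⟩ ⟨hA b (by simp), hbZ⟩ (hA m (by simp))
          hc.1 hc.2)
        (h.tail.tail.reflTransGen_cutAdj hE rfl (by simpa using hy) hbZ hyZ
          fun v hv => hA v (by simp [hv]))
    · have hmZ : m ∉ Z := h.isActiveTriple_head.not_mem hc
      exact .head (.of_adj ⟨hA a (by simp), hxZ⟩ ⟨hA m (by simp), hmZ⟩ h.adj_head)
        (h.tail.reflTransGen_cutAdj hE rfl hyl hmZ hyZ fun v hv => hA v (List.mem_cons_of_mem a hv))

end CutGraph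

theorem ActivelyConnected.exists_reflTransGen_cutAdj (hE : ∀ ⦃a b : V⦄, E a b → ¬E b a)
    {X Y : Set V} (hXZ : Disjoint X Z) (hYZ : Disjoint Y Z) (h : ActivelyConnected E Z X Y) :
    ∃ x ∈ X, ∃ y ∈ Y, ReflTransGen (CutAdj E Z (An E (X ∪ Y ∪ Z))) x y := by
  obtain ⟨l, x, y, hx, hy, hl, hlx, hly⟩ := h
  have hA := hl.forall_mem_An (W := X ∪ Y ∪ Z) Set.subset_union_right hlx hly
    (subset_An _ (Or.inl (Or.inl hx))) (subset_An _ (Or.inl (Or.inr hy)))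
  exact ⟨x, hx, y, hy, hl.reflTransGen_cutAdj hE hlx hly (Set.disjoint_left.1 hXZ hx)
    (Set.disjoint_left.1 hYZ hy) hA⟩

variable (E Z) in
/-- The invariant for lifting a path of the cut graph to an active walk. -/
def ExtendableActiveWalk (X : Set V) (l : List V) (x : V) : Prop :=
  ActiveWalk E Z l ∧ (∃ x₀ ∈ X, l.head? = some x₀) ∧ l.getLast? = some x ∧
    ∀ w, E w x → ActiveWalk E Z (l ++ [w])

theorem extendableActiveWalk_singleton {X : Set V} {x : V} (hx : x ∈ X) :
    ExtendableActiveWalk E Z X [x] x :=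
  ⟨trivial, ⟨x, hx, rfl⟩, rfl, fun _ hwx => activeWalk_pair.2 (Or.inr hwx)⟩

section Asymmetric

variable (hE : ∀ ⦃a b : V⦄, E a b → ¬E b a) {X Y : Set V}
include hE

theorem ActiveWalk.of_isChain : ∀ {l : List V}, l.IsChain E → (∀ u ∈ l, u ∉ Z) →
    ActiveWalk E Z l
  | [], _, _ | [_], _, _ => trivial
  | a :: m :: l, h, hZ => by
    rw [List.isChain_cons_cons] at h
    refine ⟨Or.inl h.1, fun b hb => .of_not_collider ?_ (hZ m (by simp)),
      ActiveWalk.of_isChain h.2 fun u hu => hZ u (List.mem_cons_of_mem a hu)⟩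
    obtain ⟨l, rfl⟩ := List.head?_eq_some_iff.1 hb
    exact fun ⟨_, hbm⟩ => hE (List.isChain_cons_cons.1 h.2).1 hbm

theorem exists_directed_activeWalk_of_not_mem_An {v : V} (hv : v ∈ An E (X ∪ Y ∪ Z))
    (hvZ : v ∉ An E Z) :
    ∃ r t, t ∈ X ∪ Y ∧ (v :: r).getLast? = some t ∧ ActiveWalk E Z (v :: r) ∧
      ∀ b ∈ r.head?, E v b := by
  obtain ⟨t, ht, hvt⟩ := hv
  have hZ : ∀ u, ReflTransGen E v u → u ∉ Z := fun u hvu huZ => hvZ ⟨u, huZ, hvu⟩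
  obtain ⟨r, hr, hrt⟩ := List.exists_isChain_cons_of_relationReflTransGen hvt
  refine ⟨r, t, ht.resolve_right (hZ t hvt),
    by rw [List.getLast?_eq_some_getLast (List.cons_ne_nil _ _), hrt],
    .of_isChain hE hr fun u hu => hZ u ?_, fun b hb => ?_⟩
  · exact hr.induction _ _ (fun _ _ hxy hvx => hvx.tail hxy) (fun _ => .refl) u hu
  · obtain ⟨r, rfl⟩ := List.head?_eq_some_iff.1 hb
    exact (List.isChain_cons_cons.1 hr).1

theorem ExtendableActiveWalk.snoc_parent {l : List V} {v w : V}
    (h : ExtendableActiveWalk E Z X l v) (hwv : E w v) (hwZ : w ∉ Z) :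
    ExtendableActiveWalk E Z X (l ++ [w]) w := by
  obtain ⟨-, ⟨x₀, hx₀, hlx⟩, hlv, hext⟩ := h
  refine ⟨hext w hwv, ⟨x₀, hx₀, by simp [hlx]⟩, by simp, fun u huw => ?_⟩
  have hglue := (hext w hwv).append_cons (l₂ := [u]) (activeWalk_pair.2 (Or.inr huw))
    fun a b ha _ => by
      obtain rfl : v = a := by simpa [hlv] using ha
      exact .of_not_collider (fun hc => hE hwv hc.1) hwZ
  simpa using hglue

/-- A collider at `v` that is not an ancestor of `Z` is bypassed along a directed path from `v`
to `X ∪ Y`: into `Y` it completes the walk, into `X` its reverse is a fresh start. -/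
theorem ExtendableActiveWalk.snoc_child {l : List V} {x v : V}
    (h : ExtendableActiveWalk E Z X l x) (hxZ : x ∉ Z) (hxv : E x v)
    (hv : v ∈ An E (X ∪ Y ∪ Z)) :
    ActivelyConnected E Z X Y ∨ ∃ l', ExtendableActiveWalk E Z X l' v := by
  obtain ⟨hl, ⟨x₀, hx₀, hlx⟩, hlx', -⟩ := h
  obtain ⟨l₀, rfl⟩ := List.getLast?_eq_some_iff.1 hlx'
  have hlv : ActiveWalk E Z (l₀ ++ [x, v]) := by
    simpa using hl.append_cons (activeWalk_pair.2 (Or.inl hxv))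
      fun _ _ _ hb => .of_not_collider (fun hc => hE hxv (Option.some_inj.1 hb ▸ hc.2)) hxZ
  by_cases hvAn : v ∈ An E Z
  · refine Or.inr ⟨l₀ ++ [x, v], hlv, ⟨x₀, hx₀, by simpa using hlx⟩, by simp, fun w hwv => ?_⟩
    simpa using ActiveWalk.append_cons (l₁ := l₀ ++ [x]) (by simpa using hlv)
      (activeWalk_pair.2 (Or.inr hwv)) fun a b ha hb => by
        obtain rfl : x = a := by simpa using ha
        obtain rfl : w = b := by simpa using hb
        exact .of_collider hxv hwv hvAn
  have hvZ : v ∉ Z := fun h => hvAn (subset_An Z h)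
  obtain ⟨r, t, htX | htY, hrt, hr, hvr⟩ := exists_directed_activeWalk_of_not_mem_An hE hv hvAn
  · refine Or.inr ⟨(v :: r).reverse, hr.reverse, ⟨t, htX, by rwa [List.head?_reverse]⟩, by simp,
      fun w hwv => ?_⟩
    simpa using ActiveWalk.append_cons (l₁ := r.reverse) (by simpa using hr.reverse)
      (activeWalk_pair.2 (Or.inr hwv)) fun b _ hb _ =>
        .of_not_collider (fun hc => hE (hvr b (by simpa using hb)) hc.1) hvZ
  · refine Or.inl ⟨l₀ ++ x :: v :: r, x₀, t, hx₀, htY, ?_, by simpa using hlx, by simpa using hrt⟩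
    simpa using ActiveWalk.append_cons (l₁ := l₀ ++ [x]) (by simpa using hlv) hr
      fun a b ha hb => .of_not_collider (fun hc => hE (hvr b hb) hc.2) hvZ

theorem CutAdj.exists_extendableActiveWalk {l : List V} {x w : V}
    (hxw : CutAdj E Z (An E (X ∪ Y ∪ Z)) x w) (h : ExtendableActiveWalk E Z X l x) :
    ActivelyConnected E Z X Y ∨ ∃ l', ExtendableActiveWalk E Z X l' w := by
  obtain ⟨⟨-, hxZ⟩, ⟨-, hwZ⟩, v, hv, hxv, hwv⟩ := hxw
  obtain hconn | ⟨l', hl'⟩ : ActivelyConnected E Z X Y ∨ ∃ l', ExtendableActiveWalk E Z X l' v := by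
    rcases hxv with rfl | hxv
    · exact Or.inr ⟨l, h⟩
    · exact h.snoc_child hE hxZ hxv hv
  · exact Or.inl hconn
  · rcases hwv with rfl | hwv
    · exact Or.inr ⟨l', hl'⟩
    · exact Or.inr ⟨_, hl'.snoc_parent hE hwv hwZ⟩

theorem activelyConnected_of_reflTransGen_cutAdj {x y : V} (hx : x ∈ X) (hy : y ∈ Y)
    (hxy : ReflTransGen (CutAdj E Z (An E (X ∪ Y ∪ Z))) x y) : ActivelyConnected E Z X Y := by
  obtain hconn | ⟨l, hl, ⟨x₀, hx₀, hlx⟩, hly, -⟩ :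
      ActivelyConnected E Z X Y ∨ ∃ l, ExtendableActiveWalk E Z X l y := by
    clear hy
    induction hxy with
    | refl => exact Or.inr ⟨[x], extendableActiveWalk_singleton hx⟩
    | tail _ hstep ih =>
      rcases ih with hconn | ⟨l, hl⟩
      · exact Or.inl hconn
      · exact hstep.exists_extendableActiveWalk hE hl
  · exact hconn
  · exact ⟨l, x₀, y, hx₀, hy, hl, hlx, hly⟩

end Asymmetric

theorem activelyConnected_iff_exists_reflTransGen_cutAdj (hE : ∀ ⦃a b : V⦄, E a b → ¬E b a)
    {X Y : Set V} (hXZ : Disjoint X Z) (hYZ : Disjoint Y Z) :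
    ActivelyConnected E Z X Y ↔
      ∃ x ∈ X, ∃ y ∈ Y, ReflTransGen (CutAdj E Z (An E (X ∪ Y ∪ Z))) x y :=
  ⟨fun h => h.exists_reflTransGen_cutAdj hE hXZ hYZ,
    fun ⟨_, hx, _, hy, hxy⟩ => activelyConnected_of_reflTransGen_cutAdj hE hx hy hxy⟩

end

theorem dsep_iff_cut_disconnected_general {V : Type}
    (E : V → V → Prop) (hacyc : IsAcyclicDigraph E)
    (X Y Z : Set V)
    (hXZ : Disjoint X Z) (hYZ : Disjoint Y Z) :
    DSep E X Y Z ↔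
      (∀ x ∈ X, ∀ y ∈ Y,
        ¬ Relation.ReflTransGen
            (fun u w =>
              u ∈ An E (X ∪ Y ∪ Z) \ Z ∧ w ∈ An E (X ∪ Y ∪ Z) \ Z ∧
              ∃ v ∈ An E (X ∪ Y ∪ Z), (u = v ∨ E u v) ∧ (w = v ∨ E w v))
            x y) := by
  rw [dsep_iff_not_activelyConnected hacyc,
    activelyConnected_iff_exists_reflTransGen_cutAdj hacyc.asymm hXZ hYZ]
  simp only [not_exists, not_and]
  rfl

/-- Equivalence of classical and categorical d-separation (Proposition 6.5 of
Fritz–Klingler, specialized to DAGs): `X` and `Y` are d-separated by `Z` iff, after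
restricting to the ancestral closure `A := An(X ∪ Y ∪ Z)` and forming the cut graph
(delete the vertices of `Z`; join two surviving vertices `u`, `w` whenever some vertex
`v` of the restriction has both `u` and `w` among `{v} ∪ Pa(v)`), no vertex of `X`
is connected to a vertex of `Y`. -/
theorem dsep_iff_cut_disconnected {V : Type} [Fintype V] [DecidableEq V]
    (E : V → V → Prop) (hacyc : IsAcyclicDigraph E)
    (X Y Z : Set V)
    (hXY : Disjoint X Y) (hXZ : Disjoint X Z) (hYZ : Disjoint Y Z) :
    DSep E X Y Z ↔
      (∀ x ∈ X, ∀ y ∈ Y,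
        ¬ Relation.ReflTransGen
            (fun u w =>
              u ∈ An E (X ∪ Y ∪ Z) \ Z ∧ w ∈ An E (X ∪ Y ∪ Z) \ Z ∧
              ∃ v ∈ An E (X ∪ Y ∪ Z), (u = v ∨ E u v) ∧ (w = v ∨ E w v))
            x y) :=
  dsep_iff_cut_disconnected_general E hacyc X Y Z hXZ hYZ
end

section
/- Let G be a finite DAG with vertex partition X, Y, Z such that X and Y are d-separated by Z, and suppose every undirected path from X to Y in G passes through Z in a blocked configuration. If a joint distribution P on finite sets factorizes according to G, then X ⊥ Y | Z holds for P, i.e. P(x,y,z)·P(z) = P(x,z)·P(y,z) for all x,y,z (soundness of d-separation, global Markov property for partitions). -/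
open Classical

/-!
Since `X, Y, Z` partition the vertices, d-separation rules out edges between `X` and `Y`, and
colliders `u → m ← w` with `u ∈ X`, `m ∈ Z`, `w ∈ Y` (read as a chain or fork instead, such a
path would need a 2-cycle). Hence every vertex lying in `X` or having a parent in `X` has its
family `{v} ∪ pa(v)` inside `X ∪ Z`, and every other vertex has it inside `Y ∪ Z`. Grouping the
kernels accordingly gives `P = f · g` with `f` a function of `(x, z)` and `g` of `(y, z)`, and
then `P(x,y,z) P(z) = f g (∑_x f) (∑_y g) = P(x,z) P(y,z)`.
-/

open Set

section Marginal

variable {V : Type} [Fintype V] [DecidableEq V] {X' : V → Type} [∀ v, Fintype (X' v)]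

theorem marg_univ (P : (∀ v, X' v) → ℝ) (x : ∀ v, X' v) : marg P univ x = P x := by
  simp [marg, ← funext_iff]

theorem marg_eq_sum_filter (P : (∀ v, X' v) → ℝ) (S : Set V) (x : ∀ v, X' v) :
    marg P S x = ∑ y with ∀ v ∈ S, y v = x v, P y := by
  rw [marg, Finset.sum_filter]

theorem marg_mul_of_dependsOn {f g : (∀ v, X' v) → ℝ} {S : Set V} (hf : DependsOn f S)
    (x : ∀ v, X' v) : marg (fun y => f y * g y) S x = f x * marg g S x := by
  rw [marg, marg, Finset.mul_sum]
  refine Finset.sum_congr rfl fun y _ => ?_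
  split_ifs with h
  · rw [hf h]
  · rw [mul_zero]

theorem marg_mul_eq_marg_mul_marg {A B S : Set V} (hAB : Disjoint A B)
    (hcover : A ∪ B ∪ S = univ) {f g : (∀ v, X' v) → ℝ} (hf : DependsOn f (A ∪ S))
    (hg : DependsOn g (B ∪ S)) (x : ∀ v, X' v) :
    marg (fun y => f y * g y) S x = marg f (B ∪ S) x * marg g (A ∪ S) x := by
  have hmem : ∀ v, v ∈ A ∨ v ∈ B ∨ v ∈ S := fun v => by
    simpa [or_assoc] using hcover.ge (mem_univ v)
  have hnotB : ∀ v ∈ A, v ∉ B := fun _ hA hB => hAB.notMem_of_mem_left hA hB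
  rw [marg_eq_sum_filter, marg_eq_sum_filter, marg_eq_sum_filter, Finset.sum_mul_sum, ← Finset.sum_product']
  symm
  -- `(a, b)` is glued to the point agreeing with `a` on `A` and with `b` off `A`.
  refine Finset.sum_nbij' (fun p => A.piecewise p.1 p.2) (fun y => (A.piecewise y x, A.piecewise x y))
    ?_ ?_ ?_ ?_ ?_
  all_goals simp only [Finset.mem_product, Finset.mem_filter, Finset.mem_univ, true_and]
  · rintro p ⟨ha, hb⟩ v hv
    by_cases hvA : v ∈ A <;> simp [hvA, ha v (.inr hv), hb v (.inr hv)]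
  · intro y hy
    constructor <;> rintro v (hv | hv) <;> by_cases hvA : v ∈ A <;> simp_all
  · rintro ⟨a, b⟩ ⟨ha, hb⟩
    ext v <;> by_cases hvA : v ∈ A <;> rcases hmem v with hv | hv | hv <;> simp_all
  · intro y hy
    ext v
    by_cases hvA : v ∈ A <;> simp [hvA]
  · rintro p ⟨ha, hb⟩
    congr 1
    · refine hf fun v hv => ?_
      by_cases hvA : v ∈ A <;> rcases hv with hv | hv <;> simp_all
    · refine hg fun v hv => ?_
      by_cases hvA : v ∈ A <;> rcases hv with hv | hv <;> simp_all

theorem condIndep_of_dependsOn_mul {A B S : Set V} (hAB : Disjoint A B)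
    (hcover : A ∪ B ∪ S = univ) {P f g : (∀ v, X' v) → ℝ} (hf : DependsOn f (A ∪ S))
    (hg : DependsOn g (B ∪ S)) (hP : ∀ x, P x = f x * g x) : CondIndep P A B S := by
  obtain rfl : P = fun x => f x * g x := funext hP
  intro x
  have hgf : marg (fun y => f y * g y) (B ∪ S) x = g x * marg f (B ∪ S) x := by
    simpa only [mul_comm (g _)] using marg_mul_of_dependsOn (g := f) hg x
  rw [hcover, marg_univ, marg_mul_eq_marg_mul_marg hAB hcover hf hg, marg_mul_of_dependsOn hf, hgf]
  ring

end Marginal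

section Graph

def family {V : Type} (E : V → V → Prop) (v : V) : Set V := insert v (Pa E v)

variable {V : Type} {E : V → V → Prop}

theorem IsAcyclicDigraph.asymm_s9 (h : IsAcyclicDigraph E) {u v : V} (huv : E u v) :
    ¬ E v u :=
  fun hvu => h u (.head huv (.single hvu))

theorem IsAcyclicDigraph.ne_of_edge (h : IsAcyclicDigraph E) {u v : V} (huv : E u v) : u ≠ v := by
  rintro rfl
  exact h u (.single huv)

variable {X Y Z : Set V}

theorem DSep.not_adj_s9 (h : DSep E X Y Z) (hXY : Disjoint X Y) {u v : V} (hu : u ∈ X)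
    (hv : v ∈ Y) : ¬ (E u v ∨ E v u) := by
  intro huv
  obtain ⟨i, _, _, _, _, _, hi, _⟩ := h [u, v] (List.isChain_pair.2 huv)
    (by simpa using hXY.ne_of_mem hu hv) ⟨u, hu, rfl⟩ ⟨v, hv, rfl⟩
  simp at hi

theorem DSep.not_collider_s9 (hE : IsAcyclicDigraph E) (h : DSep E X Y Z) (hXY : Disjoint X Y)
    {u m w : V} (hu : u ∈ X) (hw : w ∈ Y) (hm : m ∈ Z) : ¬ (E u m ∧ E w m) := by
  rintro ⟨hum, hwm⟩
  obtain ⟨i, a, m', b, ha, hm', hb, hblock⟩ := h [u, m, w]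
    (List.isChain_cons_cons.2 ⟨.inl hum, List.isChain_pair.2 (.inr hwm)⟩)
    (by simp [hE.ne_of_edge hum, (hE.ne_of_edge hwm).symm, hXY.ne_of_mem hu hw])
    ⟨u, hu, rfl⟩ ⟨w, hw, rfl⟩
  rcases i with _ | i
  swap
  · simp at hb
  simp only [List.getElem?_cons_zero, List.getElem?_cons_succ, Option.some.injEq] at ha hm' hb
  subst ha hm' hb
  rcases hblock with ⟨⟨-, hmw⟩ | ⟨hmu, -⟩ | ⟨hmu, -⟩, -⟩ | ⟨-, hnot⟩
  · exact hE.asymm_s9 hwm hmw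
  · exact hE.asymm_s9 hum hmu
  · exact hE.asymm_s9 hum hmu
  · exact hnot ⟨m, hm, .refl⟩

theorem DSep.family_subset_of_mem_or_child (hE : IsAcyclicDigraph E) (h : DSep E X Y Z)
    (hXY : Disjoint X Y) (hcover : X ∪ Y ∪ Z = univ) {v : V}
    (hv : v ∈ X ∨ ∃ u ∈ X, E u v) : family E v ⊆ X ∪ Z := by
  have hnotY : ∀ w, w ∉ Y → w ∈ X ∪ Z := fun w hw => by
    rcases hcover.ge (mem_univ w) with (hwX | hwY) | hwZ
    exacts [.inl hwX, absurd hwY hw, .inr hwZ]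
  rintro w (rfl | hwv)
  · rcases hv with hvX | ⟨u, hu, huv⟩
    · exact .inl hvX
    · exact hnotY w fun hwY => h.not_adj_s9 hXY hu hwY (.inl huv)
  · refine hnotY w fun hwY => ?_
    by_cases hvX : v ∈ X
    · exact h.not_adj_s9 hXY hvX hwY (.inr hwv)
    · obtain ⟨u, hu, huv⟩ := hv.resolve_left hvX
      have hvZ : v ∈ Z := (hnotY v fun hvY => h.not_adj_s9 hXY hu hvY (.inl huv)).resolve_left hvX
      exact h.not_collider_s9 hE hXY hu hwY hvZ ⟨huv, hwv⟩

theorem family_subset_of_notMem_or_child (hcover : X ∪ Y ∪ Z = univ) {v : V}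
    (hv : ¬ (v ∈ X ∨ ∃ u ∈ X, E u v)) : family E v ⊆ Y ∪ Z := by
  have hnotX : ∀ w, w ∉ X → w ∈ Y ∪ Z := fun w hw => by
    rcases hcover.ge (mem_univ w) with (hwX | hwY) | hwZ
    exacts [absurd hwX hw, .inl hwY, .inr hwZ]
  push Not at hv
  rintro w (rfl | hwv)
  · exact hnotX w hv.1
  · exact hnotX w fun hwX => hv.2 w hwX hwv

end Graph

theorem Factorizes.exists_dependsOn_mul {V : Type} [Fintype V] [DecidableEq V] {X' : V → Type}
    [∀ v, Fintype (X' v)] {E : V → V → Prop} {P : (∀ v, X' v) → ℝ} (hP : Factorizes E P)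
    {C S T : Set V} (hS : ∀ v ∈ C, family E v ⊆ S) (hT : ∀ v ∉ C, family E v ⊆ T) :
    ∃ f g : (∀ v, X' v) → ℝ, DependsOn f S ∧ DependsOn g T ∧ ∀ x, P x = f x * g x := by
  obtain ⟨K, -, -, hK, hPK⟩ := hP
  have hKfamily : ∀ v, DependsOn (K v) (family E v) := fun v x y hxy =>
    hK v x y (hxy v (mem_insert v _)) fun u hu => hxy u (mem_insert_of_mem v hu)
  refine ⟨fun x => ∏ v with v ∈ C, K v x, fun x => ∏ v with v ∉ C, K v x, ?_, ?_,
    fun x => by rw [hPK, Finset.prod_filter_mul_prod_filter_not]⟩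
  · intro x y hxy
    refine Finset.prod_congr rfl fun v hv => hKfamily v fun u hu => hxy u (hS v ?_ hu)
    simpa using hv
  · intro x y hxy
    refine Finset.prod_congr rfl fun v hv => hKfamily v fun u hu => hxy u (hT v ?_ hu)
    simpa using hv

theorem dsep_soundness_partition_general {V : Type} [Fintype V] [DecidableEq V]
    {X' : V → Type} [∀ v, Fintype (X' v)] (E : V → V → Prop)
    (hacyc : IsAcyclicDigraph E)
    (X Y Z : Set V)
    (hXY : Disjoint X Y)
    (hcover : X ∪ Y ∪ Z = Set.univ)
    (hsep : DSep E X Y Z)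
    (P : (∀ v, X' v) → ℝ) (hfac : Factorizes E P) :
    CondIndep P X Y Z := by
  obtain ⟨f, g, hf, hg, hP⟩ := hfac.exists_dependsOn_mul (C := {v | v ∈ X ∨ ∃ u ∈ X, E u v})
    (fun _ hv => hsep.family_subset_of_mem_or_child hacyc hXY hcover hv)
    (fun _ hv => family_subset_of_notMem_or_child hcover hv)
  exact condIndep_of_dependsOn_mul hXY hcover hf hg hP

/-- Soundness of d-separation (global Markov property for partitions): if the
vertices of a finite DAG are partitioned into `X`, `Y`, `Z` with `X` and `Y`
d-separated by `Z` (every undirected path from `X` to `Y` is blocked by `Z`), and a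
joint distribution `P` on finite sets factorizes according to the DAG, then
`X ⊥ Y | Z` holds for `P`. -/
theorem dsep_soundness_partition {V : Type} [Fintype V] [DecidableEq V]
    {X' : V → Type} [∀ v, Fintype (X' v)] (E : V → V → Prop)
    (hacyc : IsAcyclicDigraph E)
    (X Y Z : Set V)
    (hXY : Disjoint X Y) (hXZ : Disjoint X Z) (hYZ : Disjoint Y Z)
    (hcover : X ∪ Y ∪ Z = Set.univ)
    (hsep : DSep E X Y Z)
    (hblock : ∀ p : List V, IsUWalk E p → p.Nodup →
      (∃ x ∈ X, p.head? = some x) → (∃ y ∈ Y, p.getLast? = some y) → Blocked E Z p)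
    (P : (∀ v, X' v) → ℝ) (hfac : Factorizes E P) :
    CondIndep P X Y Z :=
  dsep_soundness_partition_general E hacyc X Y Z hXY hcover hsep P hfac
end

section
/- Let G be a finite DAG and P a joint distribution on finite sets. If P satisfies the local Markov property with respect to G (each variable is conditionally independent of its non-descendants excluding parents, given its parents), then P factorizes according to G, i.e. P(x) = ∏_v P(x_v | x_{Pa(v)}) where the conditionals are defined whenever P(x_{Pa(v)}) > 0. -/
open Classical

section Aux
variable {V : Type} [Fintype V] [DecidableEq V] {X : V → Type} [∀ v, Fintype (X v)]
variable (P : (∀ v, X v) → ℝ)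

lemma marg_nonneg (hnn : ∀ x, 0 ≤ P x) (S : Set V) (x : ∀ v, X v) : 0 ≤ marg P S x := by
  refine Finset.sum_nonneg fun y _ => ?_
  split_ifs
  · exact hnn y
  · exact le_refl 0

lemma marg_mono (hnn : ∀ x, 0 ≤ P x) {S T : Set V} (h : S ⊆ T) (x : ∀ v, X v) :
    marg P T x ≤ marg P S x := by
  refine Finset.sum_le_sum fun y _ => ?_
  split_ifs with h1 h2 h3
  · exact le_refl _
  · exact absurd (fun v hv => h1 v (h hv)) h2
  · exact hnn y
  · exact le_refl 0

lemma marg_congr {S : Set V} {x y : ∀ v, X v} (h : ∀ v ∈ S, x v = y v) :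
    marg P S x = marg P S y := by
  refine Finset.sum_congr rfl fun z _ => ?_
  refine if_congr ?_ rfl rfl
  constructor <;> intro hh v hv
  · rw [← h v hv]; exact hh v hv
  · rw [h v hv]; exact hh v hv

lemma marg_empty (hsum : ∑ x : ∀ v, X v, P x = 1) (x : ∀ v, X v) :
    marg P (∅ : Set V) x = 1 := by
  simp only [marg, Set.mem_empty_iff_false, false_implies, implies_true, if_true]
  exact hsum

lemma marg_univ_s12 (x : ∀ v, X v) : marg P (Set.univ : Set V) x = P x := by
  unfold marg
  rw [Finset.sum_eq_single x (fun y _ hy => by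
      rw [if_neg]; intro hc; exact hy (funext fun v => hc v trivial))
    (fun h => absurd (Finset.mem_univ x) h)]
  simp

lemma marg_sum {u : V} {S : Set V} (hu : u ∉ S) (x : ∀ v, X v) :
    ∑ a : X u, marg P (insert u S) (Function.update x u a) = marg P S x := by
  unfold marg
  rw [Finset.sum_comm]
  refine Finset.sum_congr rfl fun y _ => ?_
  refine Eq.trans (Finset.sum_eq_single (y u) ?_ ?_) ?_
  · intro b _ hb
    rw [if_neg]
    intro hC
    have := hC u (Set.mem_insert u S)
    rw [Function.update_self] at this
    exact hb this.symm
  · intro h; exact absurd (Finset.mem_univ _) h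
  · have hiff : (∀ v ∈ insert u S, y v = Function.update x u (y u) v) ↔
        (∀ v ∈ S, y v = x v) := by
      constructor
      · intro hh v hv
        have := hh v (Set.mem_insert_of_mem _ hv)
        rwa [Function.update_of_ne (show v ≠ u by rintro rfl; exact hu hv) _ _] at this
      · intro hh v hv
        rcases Set.mem_insert_iff.mp hv with rfl | hv2
        · rw [Function.update_self]
        · rw [Function.update_of_ne (show v ≠ u by rintro rfl; exact hu hv2) _ _]
          exact hh v hv2
    simp only [hiff]

lemma condIndep_shrink {A B S : Set V} {u : V} (hu : u ∉ A ∪ B ∪ S)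
    (h : CondIndep P A (insert u B) S) : CondIndep P A B S := by
  have huA : u ∉ A := fun h' => hu (Or.inl (Or.inl h'))
  have huB : u ∉ B := fun h' => hu (Or.inl (Or.inr h'))
  have huS : u ∉ S := fun h' => hu (Or.inr h')
  intro x
  have e1 : A ∪ insert u B ∪ S = insert u (A ∪ B ∪ S) := by
    rw [Set.union_insert, Set.insert_union]
  have e2 : insert u B ∪ S = insert u (B ∪ S) := by rw [Set.insert_union]
  calc marg P (A ∪ B ∪ S) x * marg P S x
      = ∑ a : X u, marg P (insert u (A ∪ B ∪ S)) (Function.update x u a) * marg P S x := by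
        rw [← Finset.sum_mul, marg_sum P hu]
    _ = ∑ a : X u, marg P (A ∪ S) (Function.update x u a) *
          marg P (insert u (B ∪ S)) (Function.update x u a) := by
        refine Finset.sum_congr rfl fun a _ => ?_
        have hxS : marg P S (Function.update x u a) = marg P S x :=
          marg_congr P fun v hv => Function.update_of_ne (show v ≠ u by rintro rfl; exact huS hv) a x
        rw [← hxS, ← e1, ← e2]
        exact h (Function.update x u a)
    _ = marg P (A ∪ S) x * marg P (B ∪ S) x := by
        rw [← marg_sum P (S := B ∪ S) (x := x) (fun h' => h'.elim huB huS), Finset.mul_sum]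
        refine Finset.sum_congr rfl fun a _ => ?_
        congr 1
        exact marg_congr P fun v hv =>
          Function.update_of_ne (show v ≠ u by rintro rfl; exact hv.elim huA huS) a x

lemma condIndep_diff {A B S : Set V} :
    ∀ D : Finset V, (∀ u ∈ D, u ∉ A ∪ B ∪ S) → CondIndep P A (B ∪ ↑D) S →
      CondIndep P A B S := by
  intro D
  induction D using Finset.induction with
  | empty => intro _ h; simpa using h
  | @insert u D hu ih =>
    intro hcond h
    apply ih (fun w hw => hcond w (Finset.mem_insert_of_mem hw))
    have hu' : u ∉ A ∪ (B ∪ ↑D) ∪ S := by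
      intro h'
      rcases h' with (h' | h') | h'
      · exact hcond u (Finset.mem_insert_self u D) (Or.inl (Or.inl h'))
      · rcases h' with h' | h'
        · exact hcond u (Finset.mem_insert_self u D) (Or.inl (Or.inr h'))
        · exact hu h'
      · exact hcond u (Finset.mem_insert_self u D) (Or.inr h')
    apply condIndep_shrink P hu'
    have : B ∪ ↑(insert u D) = insert u (B ∪ ↑D) := by
      rw [Finset.coe_insert, Set.union_insert]
    rwa [this] at h

lemma condIndep_subset {A B B' S : Set V} (hsub : B' ⊆ B) (hB : ∀ u ∈ B, u ∉ A ∪ S)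
    (h : CondIndep P A B S) : CondIndep P A B' S := by
  classical
  refine condIndep_diff P (B \ B').toFinset ?_ ?_
  · intro u hu
    rw [Set.mem_toFinset] at hu
    intro h'
    rcases h' with (h' | h') | h'
    · exact hB u hu.1 (Or.inl h')
    · exact hu.2 h'
    · exact hB u hu.1 (Or.inr h')
  · rwa [Set.coe_toFinset, Set.union_diff_cancel hsub]

end Aux

/-- Local Markov property implies factorization: if a joint probability distribution
`P` on finite sets satisfies the local Markov property with respect to a finite DAG
(each variable is conditionally independent of its non-descendants excluding its
parents, given its parents), then `P` factorizes according to the DAG, with kernels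
given by the conditionals `P(x_v | x_{Pa(v)})` wherever `P(x_{Pa(v)}) > 0`. -/
theorem localMarkov_implies_factorizes {V : Type} [Fintype V] [DecidableEq V]
    {X : V → Type} [∀ v, Fintype (X v)] (E : V → V → Prop)
    (hacyc : IsAcyclicDigraph E)
    (P : (∀ v, X v) → ℝ)
    (hnn : ∀ x, 0 ≤ P x) (hsum : ∑ x : ∀ v, X v, P x = 1)
    (hlocal : ∀ v : V,
      CondIndep P {v} ({w | w ≠ v ∧ ¬ Relation.ReflTransGen E v w} \ Pa E v) (Pa E v)) :
    ∃ K : (v : V) → (∀ u, X u) → ℝ,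
      (∀ v x, 0 ≤ K v x) ∧
      (∀ v x, ∑ a : X v, K v (Function.update x v a) = 1) ∧
      (∀ v x x', x v = x' v → (∀ u, E u v → x u = x' u) → K v x = K v x') ∧
      (∀ x, P x = ∏ v, K v x) ∧
      (∀ v x, 0 < marg P (Pa E v) x →
        K v x = marg P ({v} ∪ Pa E v) x / marg P (Pa E v) x) := by
  classical
  have hne : Nonempty (∀ v, X v) := by
    by_contra h
    rw [not_nonempty_iff] at h
    rw [Finset.univ_eq_empty, Finset.sum_empty] at hsum
    exact zero_ne_one hsum
  have hXne : ∀ v, Nonempty (X v) := fun v => ⟨(Classical.choice hne) v⟩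
  have hcard : ∀ v, (0:ℝ) < (Fintype.card (X v) : ℝ) := fun v => by
    haveI := hXne v
    exact_mod_cast Fintype.card_pos
  set K : (v : V) → (∀ u, X u) → ℝ := fun v x =>
    if 0 < marg P (Pa E v) x then marg P ({v} ∪ Pa E v) x / marg P (Pa E v) x
    else ((Fintype.card (X v) : ℝ))⁻¹ with hK
  have hvPa : ∀ v, v ∉ Pa E v := fun v hv => hacyc v (Relation.TransGen.single hv)
  have Knn : ∀ v x, 0 ≤ K v x := by
    intro v x
    simp only [hK]
    split_ifs with h
    · exact div_nonneg (marg_nonneg P hnn _ _) (le_of_lt h)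
    · exact inv_nonneg.mpr (le_of_lt (hcard v))
  have Ksum : ∀ v x, ∑ a : X v, K v (Function.update x v a) = 1 := by
    intro v x
    have hPaupd : ∀ a : X v, marg P (Pa E v) (Function.update x v a) = marg P (Pa E v) x :=
      fun a => marg_congr P fun u hu =>
        Function.update_of_ne (show u ≠ v from fun h => hvPa v (h ▸ hu)) a x
    by_cases h : 0 < marg P (Pa E v) x
    · have hterm : ∀ a : X v, K v (Function.update x v a)
          = marg P ({v} ∪ Pa E v) (Function.update x v a) / marg P (Pa E v) x := by
        intro a
        simp only [hK]
        rw [hPaupd a, if_pos h]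
      rw [Finset.sum_congr rfl (fun a _ => hterm a), ← Finset.sum_div,
        show ({v} : Set V) ∪ Pa E v = insert v (Pa E v) from (Set.insert_eq v _).symm,
        marg_sum P (hvPa v) x, div_self (ne_of_gt h)]
    · have hterm : ∀ a : X v, K v (Function.update x v a) = ((Fintype.card (X v) : ℝ))⁻¹ := by
        intro a
        simp only [hK]
        rw [hPaupd a, if_neg h]
      rw [Finset.sum_congr rfl (fun a _ => hterm a), Finset.sum_const, Finset.card_univ,
        nsmul_eq_mul, mul_inv_cancel₀ (ne_of_gt (hcard v))]
  have Kloc : ∀ v x x', x v = x' v → (∀ u, E u v → x u = x' u) → K v x = K v x' := by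
    intro v x x' hv hpa
    have h1 : marg P (Pa E v) x = marg P (Pa E v) x' := marg_congr P fun u hu => hpa u hu
    have h2 : marg P ({v} ∪ Pa E v) x = marg P ({v} ∪ Pa E v) x' := by
      refine marg_congr P fun u hu => ?_
      rcases hu with hu | hu
      · rw [Set.mem_singleton_iff] at hu; subst hu; exact hv
      · exact hpa u hu
    simp only [hK]
    rw [h1, h2]
  have hwf : WellFounded (fun a b : V => Relation.TransGen E b a) := by
    haveI : IsTrans V (fun a b : V => Relation.TransGen E b a) :=
      ⟨fun a b c h1 h2 => Relation.TransGen.trans h2 h1⟩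
    haveI : IsIrrefl V (fun a b : V => Relation.TransGen E b a) := ⟨fun a h => hacyc a h⟩
    exact Finite.wellFounded_of_trans_of_irrefl _
  have chain : ∀ (n : ℕ) (T : Finset V), T.card = n →
      (∀ u w, E u w → w ∈ T → u ∈ T) → ∀ x, marg P (↑T) x = ∏ u ∈ T, K u x := by
    intro n
    induction n with
    | zero =>
      intro T hT _ x
      rw [Finset.card_eq_zero] at hT
      subst hT
      simp only [Finset.coe_empty, Finset.prod_empty]
      exact marg_empty P hsum x
    | succ n ih =>
      intro T hT hcl x
      have hTne : T.Nonempty := Finset.card_pos.mp (by omega)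
      obtain ⟨v, hvT, hvmax⟩ := hwf.has_min ↑T (by exact_mod_cast hTne)
      have hvT' : v ∈ T := by exact_mod_cast hvT
      set T' := T.erase v with hT'
      have hcard' : T'.card = n := by
        rw [hT', Finset.card_erase_of_mem hvT', hT]
        omega
      have hcl' : ∀ u w, E u w → w ∈ T' → u ∈ T' := by
        intro u w he hw
        have hwT : w ∈ T := Finset.mem_of_mem_erase hw
        refine Finset.mem_erase.mpr ⟨?_, hcl u w he hwT⟩
        rintro rfl
        exact hvmax w (by exact_mod_cast hwT) (Relation.TransGen.single he)
      have hPaT' : Pa E v ⊆ (↑T' : Set V) := by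
        intro u hu
        have huT : u ∈ T := hcl u v hu hvT'
        refine Finset.mem_coe.mpr (Finset.mem_erase.mpr ⟨?_, huT⟩)
        intro h
        exact hvPa v (h ▸ hu)
      have hBsub : (↑T' : Set V) \ Pa E v ⊆
          {w | w ≠ v ∧ ¬ Relation.ReflTransGen E v w} \ Pa E v := by
        rintro u ⟨huT', huPa⟩
        have huT'' : u ∈ T' := Finset.mem_coe.mp huT'
        have h1 : u ≠ v := Finset.ne_of_mem_erase huT''
        refine ⟨⟨h1, ?_⟩, huPa⟩
        intro hrtg
        rcases Relation.reflTransGen_iff_eq_or_transGen.mp hrtg with h | h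
        · exact h1 h
        · exact hvmax u (by exact_mod_cast Finset.mem_of_mem_erase huT'') h
      have hCI : CondIndep P {v} ((↑T' : Set V) \ Pa E v) (Pa E v) := by
        refine condIndep_subset P hBsub ?_ (hlocal v)
        rintro u ⟨⟨h1, _⟩, h2⟩ h'
        rcases h' with h' | h'
        · exact h1 (Set.mem_singleton_iff.mp h')
        · exact h2 h'
      have hid := hCI x
      have e1 : (↑T' : Set V) \ Pa E v ∪ Pa E v = ↑T' := Set.diff_union_of_subset hPaT'
      have e2 : ({v} : Set V) ∪ ((↑T' : Set V) \ Pa E v) ∪ Pa E v = ↑T := by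
        rw [Set.union_assoc, e1, ← Set.insert_eq, hT', ← Finset.coe_insert,
          Finset.insert_erase hvT']
      rw [e2, e1] at hid
      have hprod : ∏ u ∈ T, K u x = K v x * ∏ u ∈ T', K u x :=
        (Finset.mul_prod_erase T _ hvT').symm
      have ihT' := ih T' hcard' hcl' x
      by_cases hpos : 0 < marg P (Pa E v) x
      · have hKv : K v x = marg P ({v} ∪ Pa E v) x / marg P (Pa E v) x := by
          simp only [hK]
          rw [if_pos hpos]
        rw [hprod, hKv, ← ihT', div_mul_eq_mul_div, eq_div_iff (ne_of_gt hpos)]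
        exact hid
      · have h0 : marg P (Pa E v) x = 0 :=
          le_antisymm (not_lt.mp hpos) (marg_nonneg P hnn _ _)
        have hPaT : Pa E v ⊆ (↑T : Set V) := fun u hu =>
          Finset.mem_coe.mpr (Finset.mem_of_mem_erase (Finset.mem_coe.mp (hPaT' hu)))
        have hT0 : marg P (↑T) x = 0 :=
          le_antisymm (h0 ▸ marg_mono P hnn hPaT x) (marg_nonneg P hnn _ _)
        have hT'0 : marg P (↑T') x = 0 :=
          le_antisymm (h0 ▸ marg_mono P hnn hPaT' x) (marg_nonneg P hnn _ _)
        rw [hT0, hprod, ← ihT', hT'0, mul_zero]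
  refine ⟨K, Knn, Ksum, Kloc, ?_, ?_⟩
  · intro x
    have h := chain (Finset.univ.card) Finset.univ rfl (fun u w _ _ => Finset.mem_univ u) x
    rw [Finset.coe_univ, marg_univ_s12 P x] at h
    exact h
  · intro v x h
    simp only [hK]
    rw [if_pos h]
end

section
/- In a Markov category, conditional independence satisfies the weak union property when conditionals exist: if a state f : I → X⊗Y⊗W⊗Z displays X ⊥ (Y⊗W) | Z and the category has conditionals, then f displays X ⊥ Y | (W⊗Z). -/
open CategoryTheory MonoidalCategory

/-- A Markov category: a symmetric monoidal category where every object carries a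
commutative comonoid structure (copy/del), compatible with the monoidal structure,
with the discard map `del` natural. -/
class MarkovCategory' (C : Type*) [Category C] [MonoidalCategory C] [SymmetricCategory C] where
  copy : ∀ X : C, X ⟶ X ⊗ X
  del : ∀ X : C, X ⟶ 𝟙_ C
  copy_del_left : ∀ X : C, copy X ≫ (del X ▷ X) ≫ (λ_ X).hom = 𝟙 X
  copy_del_right : ∀ X : C, copy X ≫ (X ◁ del X) ≫ (ρ_ X).hom = 𝟙 X
  copy_assoc : ∀ X : C, copy X ≫ (copy X ▷ X) ≫ (α_ X X X).hom = copy X ≫ (X ◁ copy X)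
  copy_comm : ∀ X : C, copy X ≫ (β_ X X).hom = copy X
  copy_tensor : ∀ X Y : C, copy (X ⊗ Y) =
    (copy X ⊗ₘ copy Y) ≫ (α_ X X (Y ⊗ Y)).hom ≫ (X ◁ (α_ X Y Y).inv) ≫
      (X ◁ ((β_ X Y).hom ▷ Y)) ≫ (X ◁ (α_ Y X Y).hom) ≫ (α_ X Y (X ⊗ Y)).inv
  del_tensor : ∀ X Y : C, del (X ⊗ Y) = (del X ⊗ₘ del Y) ≫ (λ_ (𝟙_ C)).hom
  copy_unit : copy (𝟙_ C) = (λ_ (𝟙_ C)).inv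
  del_unit : del (𝟙_ C) = 𝟙 (𝟙_ C)
  del_natural : ∀ {X Y : C} (f : X ⟶ Y), f ≫ del Y = del X

open MarkovCategory'

variable {C : Type*} [Category C] [MonoidalCategory C] [SymmetricCategory C] [MarkovCategory' C]

/-- A state `f : I ⟶ X ⊗ (Y ⊗ Z)` displays the conditional independence `X ⊥ Y | Z` if
it factors as a state on `Z`, copying of `Z`, and morphisms `g : Z ⟶ X`, `h : Z ⟶ Y`
applied to two of the copies (the third copy being the `Z`-output). -/
def CIState {X Y Z : C} (f : 𝟙_ C ⟶ X ⊗ (Y ⊗ Z)) : Prop :=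
  ∃ (p : 𝟙_ C ⟶ Z) (g : Z ⟶ X) (h : Z ⟶ Y),
    f = p ≫ copy Z ≫ (Z ◁ copy Z) ≫ (g ⊗ₘ (h ▷ Z))

/-- A Markov category has conditionals if every `f : A ⟶ X ⊗ Y` factors through its
`X`-marginal followed by a conditional `c : X ⊗ A ⟶ Y`. -/
def HasConditionals (C : Type*) [Category C] [MonoidalCategory C] [SymmetricCategory C]
    [MarkovCategory' C] : Prop :=
  ∀ (A X Y : C) (f : A ⟶ X ⊗ Y), ∃ c : X ⊗ A ⟶ Y,
    f = copy A ≫ ((f ≫ (X ◁ del Y) ≫ (ρ_ X).hom) ▷ A) ≫ (copy X ▷ A) ≫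
      (α_ X X A).hom ≫ (X ◁ c)

/-! Write the state as `z ~ p`, `x ~ g z`, `(y, w) ~ h z`. Disintegrating `h` into its
`W`-marginal `m` and a conditional `c : W ⊗ Z ⟶ Y` shows that drawing `(y, w) ~ h z` is the same
as drawing `w ~ m z` and then `y ~ c (w, z)`. Hence the state on `W ⊗ Z` obtained by pushing `p`
along `z ↦ (m z, z)`, together with `g` (ignoring `w`) and `c`, exhibits `X ⊥ Y | W ⊗ Z`. -/

namespace MarkovCategory'

def graph {A B : C} (k : A ⟶ B) : A ⟶ B ⊗ A := copy A ≫ (k ▷ A)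

def discardLeft (W A : C) : W ⊗ A ⟶ A := (del W ▷ A) ≫ (λ_ A).hom

theorem ciState_iff {X Y Z : C} (f : 𝟙_ C ⟶ X ⊗ (Y ⊗ Z)) :
    CIState f ↔ ∃ (p : 𝟙_ C ⟶ Z) (g : Z ⟶ X) (h : Z ⟶ Y),
      f = p ≫ copy Z ≫ (g ▷ Z) ≫ (X ◁ graph h) := by
  have reshape : ∀ (g : Z ⟶ X) (h : Z ⟶ Y),
      copy Z ≫ (Z ◁ copy Z) ≫ (g ⊗ₘ (h ▷ Z)) = copy Z ≫ (g ▷ Z) ≫ (X ◁ graph h) := by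
    intro g h
    rw [graph, MonoidalCategory.tensorHom_def, whisker_exchange_assoc,
      MonoidalCategory.whiskerLeft_comp]
  simp only [CIState, reshape]

theorem copy_comp_del_whiskerRight (X : C) : copy X ≫ (del X ▷ X) = (λ_ X).inv :=
  (Iso.comp_hom_eq_id _).1 (by simpa only [Category.assoc] using copy_del_left X)

theorem copy_tensor_eq_tensorμ (X Y : C) :
    copy (X ⊗ Y) = (copy X ⊗ₘ copy Y) ≫ tensorμ X X Y Y :=
  copy_tensor X Y

theorem graph_discardLeft (W Z : C) :
    graph (discardLeft W Z) =
      (W ◁ copy Z) ≫ (α_ W Z Z).inv ≫ ((β_ W Z).hom ▷ Z) ≫ (α_ Z W Z).hom := by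
  have h1 : tensorμ W W Z Z ≫ ((del W ▷ Z) ▷ (W ⊗ Z)) =
      ((del W ▷ W) ▷ (Z ⊗ Z)) ≫ tensorμ (𝟙_ C) W Z Z := by
    simpa using (tensorμ_natural_left (del W) (𝟙 W) Z Z).symm
  have h2 : (copy W ⊗ₘ copy Z) ≫ ((del W ▷ W) ▷ (Z ⊗ Z)) = ((λ_ W).inv ⊗ₘ copy Z) := by
    rw [← tensorHom_id, tensorHom_comp_tensorHom, Category.comp_id, copy_comp_del_whiskerRight]
  rw [graph, discardLeft, copy_tensor_eq_tensorμ, comp_whiskerRight, Category.assoc,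
    reassoc_of% h1, reassoc_of% h2]
  simp [tensorμ, MonoidalCategory.tensorHom_def]

theorem graph_comp_graph_discardLeft {W Z : C} (m : Z ⟶ W) :
    graph m ≫ graph (discardLeft W Z) = copy Z ≫ (Z ◁ graph m) := by
  have braid : copy Z ≫ ((m ▷ Z) ≫ (β_ W Z).hom) = copy Z ≫ (Z ◁ m) := by
    rw [BraidedCategory.braiding_naturality_left, reassoc_of% copy_comm]
  calc graph m ≫ graph (discardLeft W Z)
      = copy Z ≫ (Z ◁ copy Z) ≫ (α_ Z Z Z).inv ≫
          ((m ▷ Z) ▷ Z) ≫ ((β_ W Z).hom ▷ Z) ≫ (α_ Z W Z).hom := by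
        rw [graph_discardLeft, graph, Category.assoc, ← whisker_exchange_assoc]
        simp
    _ = copy Z ≫ (copy Z ▷ Z) ≫ ((Z ◁ m) ▷ Z) ≫ (α_ Z W Z).hom := by
        rw [reassoc_of% (copy_assoc Z).symm, Iso.hom_inv_id_assoc,
          ← comp_whiskerRight_assoc, ← comp_whiskerRight_assoc, ← comp_whiskerRight_assoc,
          Category.assoc, braid]
    _ = copy Z ≫ (Z ◁ graph m) := by
        rw [graph]
        simp [reassoc_of% (copy_assoc Z).symm]

theorem graph_comp_graph {W Y Z : C} (m : Z ⟶ W) (c : W ⊗ Z ⟶ Y) :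
    graph m ≫ graph c =
      graph (graph m ≫ (copy W ▷ Z) ≫ (α_ W W Z).hom ≫ (W ◁ c) ≫ (β_ W Y).hom) ≫
        (α_ Y W Z).hom := by
  -- Both sides copy `Z` twice and `W` once: they agree by coassociativity of `copy Z`
  -- and commutativity of `copy W`.
  have shuffle : (((α_ W W Z).hom ≫ (W ◁ c) ≫ (β_ W Y).hom) ▷ Z) ≫ (α_ Y W Z).hom =
      (((β_ W W).hom ▷ Z) ▷ Z) ≫ (α_ (W ⊗ W) Z Z).hom ≫ tensorμ W W Z Z ≫ (c ▷ (W ⊗ Z)) := by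
    simp [tensorμ]
  calc graph m ≫ graph c
      = copy Z ≫ (copy Z ▷ Z) ≫ (((m ≫ copy W) ▷ Z) ▷ Z) ≫ (α_ (W ⊗ W) Z Z).hom ≫
          tensorμ W W Z Z ≫ (c ▷ (W ⊗ Z)) := by
        simp only [graph, copy_tensor_eq_tensorμ, tensorHom_def', Category.assoc]
        rw [← whisker_exchange_assoc, reassoc_of% (copy_assoc Z).symm]
        simp
    _ = copy Z ≫ (copy Z ▷ Z) ≫ (((m ≫ copy W ≫ (β_ W W).hom) ▷ Z) ▷ Z) ≫
          (α_ (W ⊗ W) Z Z).hom ≫ tensorμ W W Z Z ≫ (c ▷ (W ⊗ Z)) := by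
        rw [copy_comm]
    _ = _ := by
        rw [← Category.assoc m, comp_whiskerRight, comp_whiskerRight, Category.assoc, ← shuffle]
        simp [graph]

end MarkovCategory'

/-- Weak union: in a Markov category with conditionals, if a state
`f : I ⟶ X ⊗ ((Y ⊗ W) ⊗ Z)` displays `X ⊥ (Y ⊗ W) | Z`, then (after reassociating the
tensor factors) it displays `X ⊥ Y | (W ⊗ Z)`. -/
theorem ci_weak_union (hcond : HasConditionals C)
    {X Y W Z : C} (f : 𝟙_ C ⟶ X ⊗ ((Y ⊗ W) ⊗ Z))
    (hf : CIState f) :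
    CIState (f ≫ (X ◁ (α_ Y W Z).hom)) := by
  obtain ⟨p, g, h, rfl⟩ := (ciState_iff f).1 hf
  obtain ⟨c, hc⟩ := hcond Z W Y (h ≫ (β_ Y W).hom)
  set m : Z ⟶ W := (h ≫ (β_ Y W).hom) ≫ (W ◁ del Y) ≫ (ρ_ W).hom
  have hh : h = graph m ≫ (copy W ▷ Z) ≫ (α_ W W Z).hom ≫ (W ◁ c) ≫ (β_ W Y).hom := by
    calc h = (h ≫ (β_ Y W).hom) ≫ (β_ W Y).hom := by simp
      _ = _ := by rw [hc]; simp only [graph, Category.assoc]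
  refine (ciState_iff _).2 ⟨p ≫ graph m, discardLeft W Z ≫ g, c, ?_⟩
  calc (p ≫ copy Z ≫ (g ▷ Z) ≫ (X ◁ graph h)) ≫ (X ◁ (α_ Y W Z).hom)
      = p ≫ copy Z ≫ (g ▷ Z) ≫ (X ◁ (graph m ≫ graph c)) := by
        rw [graph_comp_graph, ← hh]
        simp only [Category.assoc, MonoidalCategory.whiskerLeft_comp]
    _ = p ≫ copy Z ≫ (Z ◁ graph m) ≫ (g ▷ _) ≫ (X ◁ graph c) := by
        rw [MonoidalCategory.whiskerLeft_comp, whisker_exchange_assoc]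
    _ = p ≫ graph m ≫ graph (discardLeft W Z) ≫ (g ▷ _) ≫ (X ◁ graph c) := by
        rw [reassoc_of% graph_comp_graph_discardLeft]
    _ = (p ≫ graph m) ≫ copy (W ⊗ Z) ≫ ((discardLeft W Z ≫ g) ▷ (W ⊗ Z)) ≫
          (X ◁ graph c) := by
        simp only [graph, comp_whiskerRight, Category.assoc]
end

section
/- In FinStoch, let r be a joint distribution on finite sets Z₁ × Z₂, and let t be the distribution on Z₂ × Z₁ × Z₂ × Z₁ obtained by duplicating both coordinates: t(x,z₁,z₂,y) = r(z₁,z₂)·[x = z₂]·[y = z₁]. Then t satisfies X ⊥ (Y,Z₂) | Z₁ and Y ⊥ (X,Z₁) | Z₂ if and only if there exist functions d : Z₁ → Z₂ and d' : Z₂ → Z₁ such that r(z₁,z₂) > 0 implies z₂ = d(z₁) and z₁ = d'(z₂); i.e. r is supported on the graph of a partial bijection. -/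
/-- Example 6.13(i) of Fritz–Klingler in FinStoch: let `r` be a joint distribution on
`Z₁ × Z₂` and let `t` on `Z₂ × Z₁ × Z₂ × Z₁` be obtained by duplicating both
coordinates, `t(x,z₁,z₂,y) = r(z₁,z₂)·[x = z₂]·[y = z₁]`. Then `t` satisfies
`X ⊥ (Y,Z₂) | Z₁` and `Y ⊥ (X,Z₁) | Z₂` iff there are functions `d : Z₁ → Z₂` and
`d' : Z₂ → Z₁` such that `r(z₁,z₂) > 0` implies `z₂ = d z₁` and `z₁ = d' z₂`,
i.e. `r` is supported on the graph of a partial bijection. -/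
theorem duplicated_finstoch_ci_iff_partial_bijection
    {Z₁ Z₂ : Type} [Fintype Z₁] [Fintype Z₂] [DecidableEq Z₁] [DecidableEq Z₂]
    (r : Z₁ → Z₂ → ℝ) (hnn : ∀ z₁ z₂, 0 ≤ r z₁ z₂)
    (hsum : ∑ z₁ : Z₁, ∑ z₂ : Z₂, r z₁ z₂ = 1)
    (t : Z₂ → Z₁ → Z₂ → Z₁ → ℝ)
    (ht : ∀ x a b y, t x a b y =
      r a b * (if x = b then (1:ℝ) else 0) * (if y = a then (1:ℝ) else 0)) :
    (((∀ x a b y, t x a b y * (∑ x' : Z₂, ∑ b' : Z₂, ∑ y' : Z₁, t x' a b' y') =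
        (∑ b' : Z₂, ∑ y' : Z₁, t x a b' y') * (∑ x' : Z₂, t x' a b y)) ∧
      (∀ x a b y, t x a b y * (∑ x' : Z₂, ∑ a' : Z₁, ∑ y' : Z₁, t x' a' b y') =
        (∑ x' : Z₂, ∑ a' : Z₁, t x' a' b y) * (∑ y' : Z₁, t x a b y')))
      ↔
      ∃ (d : Z₁ → Z₂) (d' : Z₂ → Z₁),
        ∀ a b, 0 < r a b → b = d a ∧ a = d' b) := by
  have hZ₁ : Nonempty Z₁ := by
    by_contra h
    rw [not_nonempty_iff] at h
    simp [Finset.univ_eq_empty] at hsum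
  have hZ₂ : Nonempty Z₂ := by
    by_contra h
    rw [not_nonempty_iff] at h
    simp [Finset.univ_eq_empty] at hsum
  -- simplify the two CI conditions into pointwise forms
  have e1 : ∀ x a b y, t x a b y * (∑ x' : Z₂, ∑ b' : Z₂, ∑ y' : Z₁, t x' a b' y') =
      (r a b * (if x = b then (1:ℝ) else 0) * (if y = a then (1:ℝ) else 0)) *
        (∑ b' : Z₂, r a b') := by
    intro x a b y
    simp [ht, mul_ite, ite_mul, mul_one, mul_zero, zero_mul, Finset.sum_ite_eq',
      Finset.sum_ite_eq]
  have e1r : ∀ x a b y, (∑ b' : Z₂, ∑ y' : Z₁, t x a b' y') * (∑ x' : Z₂, t x' a b y) =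
      r a x * (r a b * (if y = a then (1:ℝ) else 0)) := by
    intro x a b y
    simp [ht, mul_ite, ite_mul, mul_one, mul_zero, zero_mul, Finset.sum_ite_eq',
      Finset.sum_ite_eq]
  have e2 : ∀ x a b y, t x a b y * (∑ x' : Z₂, ∑ a' : Z₁, ∑ y' : Z₁, t x' a' b y') =
      (r a b * (if x = b then (1:ℝ) else 0) * (if y = a then (1:ℝ) else 0)) *
        (∑ a' : Z₁, r a' b) := by
    intro x a b y
    simp [ht, mul_ite, ite_mul, mul_one, mul_zero, zero_mul, Finset.sum_ite_eq',
      Finset.sum_ite_eq]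
  have e2r : ∀ x a b y, (∑ x' : Z₂, ∑ a' : Z₁, t x' a' b y) * (∑ y' : Z₁, t x a b y') =
      r y b * (r a b * (if x = b then (1:ℝ) else 0)) := by
    intro x a b y
    simp [ht, mul_ite, ite_mul, mul_one, mul_zero, zero_mul, Finset.sum_ite_eq',
      Finset.sum_ite_eq]
  constructor
  · rintro ⟨h1, h2⟩
    have row : ∀ a b b', 0 < r a b → 0 < r a b' → b' = b := by
      intro a b b' hb hb'
      by_contra hne
      have := h1 b' a b a
      rw [e1, e1r] at this
      simp [hne] at this
      rcases this with h | h
      · exact absurd h (ne_of_gt hb')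
      · exact absurd h (ne_of_gt hb)
    have col : ∀ a b a', 0 < r a b → 0 < r a' b → a' = a := by
      intro a b a' hb hb'
      by_contra hne
      have := h2 b a b a'
      rw [e2, e2r] at this
      simp [hne] at this
      rcases this with h | h
      · exact absurd h (ne_of_gt hb')
      · exact absurd h (ne_of_gt hb)
    refine ⟨fun a => if h : ∃ b, 0 < r a b then h.choose else Classical.arbitrary Z₂,
      fun b => if h : ∃ a, 0 < r a b then h.choose else Classical.arbitrary Z₁, ?_⟩
    intro a b hab
    constructor
    · have h : ∃ b, 0 < r a b := ⟨b, hab⟩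
      simp only [dif_pos h]
      exact (row a b h.choose hab h.choose_spec).symm
    · have h : ∃ a, 0 < r a b := ⟨a, hab⟩
      simp only [dif_pos h]
      exact (col a b h.choose hab h.choose_spec).symm
  · rintro ⟨d, d', hd⟩
    have row0 : ∀ a b x, 0 < r a b → x ≠ b → r a x = 0 := by
      intro a b x hb hx
      rcases (hnn a x).lt_or_eq with h | h
      · exact absurd (((hd a x h).1).trans ((hd a b hb).1).symm) hx
      · exact h.symm
    have rowsum : ∀ a b, 0 < r a b → (∑ b' : Z₂, r a b') = r a b := by
      intro a b hb
      apply Finset.sum_eq_single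
      · intro b' _ hb'
        exact row0 a b b' hb hb'
      · intro h; simp at h
    have col0 : ∀ a b y, 0 < r a b → y ≠ a → r y b = 0 := by
      intro a b y hb hy
      rcases (hnn y b).lt_or_eq with h | h
      · exact absurd (((hd y b h).2).trans ((hd a b hb).2).symm) hy
      · exact h.symm
    have colsum : ∀ a b, 0 < r a b → (∑ a' : Z₁, r a' b) = r a b := by
      intro a b hb
      apply Finset.sum_eq_single
      · intro a' _ ha'
        exact col0 a b a' hb ha'
      · intro h; simp at h
    constructor
    · intro x a b y
      rw [e1, e1r]
      rcases (hnn a b).lt_or_eq with hb | hb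
      · rw [rowsum a b hb]
        by_cases hx : x = b
        · subst hx; simp
        · rw [row0 a b x hb hx]
          simp [hx]
      · rw [← hb]; simp
    · intro x a b y
      rw [e2, e2r]
      rcases (hnn a b).lt_or_eq with hb | hb
      · rw [colsum a b hb]
        by_cases hy : y = a
        · subst hy; simp
        · rw [col0 a b y hb hy]
          simp [hy]
      · rw [← hb]; simp
end
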